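/- arXiv:math/0202197 — 6 statements merged into one kernel-verified Lean document; each statement's English description precedes it below -/
import Mathlib

section
/- Let φ: N → N' be a surjective homomorphism of finitely generated modules over a principal ideal domain. If N and N' have the same rank, then φ restricts to a surjection from the torsion submodule of N onto the torsion submodule of N'. -/
/-- Lemma 2.3: a surjective homomorphism of finitely generated modules of equal
rank over a PID restricts to a surjection of torsion submodules. -/
theorem torsion_surjective_of_rank_eq
    {R M N : Type} [CommRing R] [IsDomain R] [IsPrincipalIdealRing R]
    [AddCommGroup M] [Module R M] [Module.Finite R M]
    [AddCommGroup N] [Module R N] [Module.Finite R N]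
    (φ : M →ₗ[R] N) (hφ : Function.Surjective φ)
    (hrank : Module.rank R M = Module.rank R N) :
    ∀ y ∈ Submodule.torsion R N, ∃ x ∈ Submodule.torsion R M, φ x = y := by
  have hq := Submodule.rank_quotient_add_rank (LinearMap.ker φ)
  have hequiv : Module.rank R (M ⧸ LinearMap.ker φ) = Module.rank R N :=
    (φ.quotKerEquivOfSurjective hφ).rank_eq
  rw [hequiv, hrank] at hq
  have hfin : Module.rank R N < Cardinal.aleph0 := Module.rank_lt_aleph0 R N
  have hker : Module.rank R (LinearMap.ker φ) = 0 :=
    Cardinal.eq_of_add_eq_add_left (by rw [hq, add_zero]) hfin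
  rw [rank_eq_zero_iff] at hker
  intro y hy
  obtain ⟨a, hay⟩ := hy
  obtain ⟨x, hx⟩ := hφ y
  have hmem : a.1 • x ∈ LinearMap.ker φ := by
    rw [LinearMap.mem_ker, map_smul, hx]
    simpa [Submonoid.smul_def] using hay
  obtain ⟨b, hb, hbax⟩ := hker ⟨a.1 • x, hmem⟩
  refine ⟨x, ⟨⟨b * a.1, mul_mem (mem_nonZeroDivisors_of_ne_zero hb) a.2⟩, ?_⟩, hx⟩
  have : b • (a.1 • x) = 0 := congrArg Subtype.val hbax
  simpa [mul_smul] using this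
end

section
/- For any complex number α, the integral from 0 to 1 of log|α − e^{2πiθ}| dθ equals log max{1, |α|}. -/
open Real

open MeasureTheory intervalIntegral


noncomputable def ee (θ : ℝ) : ℂ := Complex.exp (2 * Real.pi * Complex.I * θ)

lemma ee_eq_circleMap (θ : ℝ) : ee θ = circleMap 0 1 (2 * Real.pi * θ) := by
  simp [ee, circleMap_zero]
  push_cast
  ring_nf

lemma meanvalue {w : ℂ} (hw : ‖w‖ < 1) :
    ∫ θ in (0:ℝ)..1, Real.log (‖1 - w * ee θ‖) = 0 := by
  set f : ℂ → ℂ := fun z => Complex.log (1 - w * z) with hf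
  have hne : ∀ z : ℂ, ‖z‖ ≤ 1 → (1 - w * z) ∈ Complex.slitPlane := by
    intro z hz
    left
    have h1 : ‖w * z‖ < 1 := by
      rw [norm_mul]
      calc ‖w‖ * ‖z‖ ≤ ‖w‖ * 1 :=
        mul_le_mul_of_nonneg_left hz (norm_nonneg w)
      _ < 1 := by simpa using hw
    have h2 : (w * z).re < 1 := lt_of_le_of_lt (Complex.re_le_norm _) h1
    simp only [Complex.sub_re, Complex.one_re]
    linarith
  have hdiff : ∀ z ∈ Metric.closedBall (0:ℂ) 1, DifferentiableAt ℂ f z := by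
    intro z hz
    simp only [Metric.mem_closedBall, dist_zero_right] at hz
    exact (Complex.differentiableAt_log (hne z hz)).comp z
      (by fun_prop : DifferentiableAt ℂ (fun z => 1 - w * z) z)
  have hd : DiffContOnCl ℂ f (Metric.ball 0 1) := by
    apply DifferentiableOn.diffContOnCl
    intro z hz
    rw [closure_ball (0:ℂ) one_ne_zero] at hz
    exact (hdiff z hz).differentiableWithinAt
  have hcirc := hd.circleIntegral_sub_inv_smul (Metric.mem_ball_self one_pos)
  have hf0 : f 0 = 0 := by simp [hf]
  rw [hf0, smul_zero] at hcirc
  rw [circleIntegral] at hcirc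
  have heq : ∀ θ : ℝ, deriv (circleMap 0 1) θ • ((circleMap 0 1 θ - 0)⁻¹ • f (circleMap 0 1 θ))
      = Complex.I * f (circleMap 0 1 θ) := by
    intro θ
    have hne0 : circleMap 0 1 θ ≠ 0 := circleMap_ne_center one_ne_zero
    simp only [deriv_circleMap, smul_eq_mul, sub_zero]
    field_simp
  simp_rw [heq] at hcirc
  rw [intervalIntegral.integral_const_mul, mul_eq_zero] at hcirc
  have h2 : ∫ θ in (0:ℝ)..2*π, f (circleMap 0 1 θ) = 0 :=
    hcirc.resolve_left Complex.I_ne_zero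
  have hcont : Continuous fun θ : ℝ => f (circleMap 0 1 θ) := by
    rw [continuous_iff_continuousAt]
    intro θ
    have h1 : ‖circleMap 0 1 θ‖ ≤ 1 := by simp
    have hg : ContinuousAt (fun θ : ℝ => 1 - w * circleMap 0 1 θ) θ := by fun_prop
    exact ContinuousAt.comp (g := Complex.log) (f := fun θ : ℝ => 1 - w * circleMap 0 1 θ)
      ((Complex.differentiableAt_log (hne _ h1)).continuousAt) hg
  have h3 : ∫ θ in (0:ℝ)..2*π, Real.log (‖1 - w * circleMap 0 1 θ‖) = 0 := by
    have hint : IntervalIntegrable (fun θ => f (circleMap 0 1 θ)) volume 0 (2*π) :=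
      hcont.intervalIntegrable _ _
    have h4 := Complex.reCLM.intervalIntegral_comp_comm hint
    rw [h2] at h4
    simpa [hf, Complex.log_re] using h4
  have h5 := intervalIntegral.integral_comp_mul_left
    (fun θ => Real.log (‖1 - w * circleMap 0 1 θ‖))
    (a := 0) (b := 1) (two_pi_pos.ne')
  simp only [mul_zero, mul_one] at h5
  simp_rw [ee_eq_circleMap]
  rw [h5, h3, smul_zero]

lemma log_intervalIntegrable : IntervalIntegrable Real.log volume 0 1 := by
  have h : IntervalIntegrable (fun x : ℝ => -Real.log x) volume 0 1 := by
    apply intervalIntegral.intervalIntegrable_deriv_of_nonneg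
      (g := fun x : ℝ => x - x * Real.log x) (g' := fun x : ℝ => -Real.log x)
    · exact (continuous_id.sub Real.continuous_mul_log).continuousOn
    · intro x hx
      simp only [min_def, max_def] at hx
      norm_num at hx
      have : HasDerivAt (fun x : ℝ => x - x * Real.log x) _ x :=
        (hasDerivAt_id x).sub (Real.hasDerivAt_mul_log hx.1.ne')
      convert this using 1
      ring
    · intro x hx
      simp only [min_def, max_def] at hx
      norm_num at hx
      simp only [Left.nonneg_neg_iff]
      exact Real.log_nonpos hx.1.le hx.2.le
  have := h.neg
  convert this using 1
  funext x
  simp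

lemma abs_one_sub_ee {θ : ℝ} (h0 : 0 ≤ θ) (h1 : θ ≤ 1) :
    ‖1 - ee θ‖ = 2 * Real.sin (π * θ) := by
  have hre : (1 - ee θ).re = 1 - Real.cos (2*π*θ) := by
    simp [ee, Complex.exp_re, Complex.exp_im]
  have him : (1 - ee θ).im = - Real.sin (2*π*θ) := by
    simp [ee, Complex.exp_re, Complex.exp_im]
  have hsin : 0 ≤ Real.sin (π * θ) := by
    apply Real.sin_nonneg_of_nonneg_of_le_pi
    · positivity
    · nlinarith [Real.pi_pos]
  rw [Complex.norm_def, Complex.normSq_apply, hre, him]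
  have hkey : (1 - Real.cos (2*π*θ)) * (1 - Real.cos (2*π*θ)) +
      -Real.sin (2*π*θ) * -Real.sin (2*π*θ) = (2 * Real.sin (π * θ))^2 := by
    have hc : Real.cos (2*π*θ) = 2 * Real.cos (π*θ)^2 - 1 := by
      rw [show 2*π*θ = 2*(π*θ) by ring, Real.cos_two_mul]
    have hs := Real.sin_sq_add_cos_sq (2*π*θ)
    have hs2 := Real.sin_sq_add_cos_sq (π*θ)
    nlinarith
  rw [hkey, Real.sqrt_sq (by positivity)]

lemma abs_one_sub_ee_bounds {θ : ℝ} (h0 : 0 < θ) (h1 : θ < 1) :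
    4*θ*(1-θ) ≤ ‖1 - ee θ‖ ∧ ‖1 - ee θ‖ ≤ 2 := by
  rw [abs_one_sub_ee h0.le h1.le]
  constructor
  · rcases le_total θ (1/2) with hc | hc
    · have := Real.mul_le_sin (x := π * θ) (by positivity) (by nlinarith [Real.pi_pos])
      have hπ := Real.pi_pos
      rw [show 2 / π * (π * θ) = 2*θ by field_simp] at this
      nlinarith
    · have := Real.mul_le_sin (x := π * (1-θ)) (by nlinarith [Real.pi_pos]) (by nlinarith [Real.pi_pos])
      have hπ := Real.pi_pos
      rw [show 2 / π * (π * (1-θ)) = 2*(1-θ) by field_simp] at this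
      rw [show π * θ = π - π * (1-θ) by ring, Real.sin_pi_sub]
      nlinarith
  · nlinarith [Real.sin_le_one (π * θ)]

lemma h_integrable : IntervalIntegrable (fun θ => Real.log (‖1 - ee θ‖)) volume 0 1 := by
  set G : ℝ → ℝ := fun θ => Real.log 2 - (Real.log 4 + Real.log θ + Real.log (1 - θ)) with hG
  have hGint : IntervalIntegrable G volume 0 1 := by
    apply IntervalIntegrable.sub (intervalIntegrable_const)
    apply IntervalIntegrable.add
    apply IntervalIntegrable.add (intervalIntegrable_const) log_intervalIntegrable
    have := (log_intervalIntegrable.comp_sub_left 1).symm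
    simpa using this
  have hmeas : AEStronglyMeasurable (fun θ => Real.log (‖1 - ee θ‖))
      (volume.restrict (Set.uIoc (0:ℝ) 1)) := by
    apply Measurable.aestronglyMeasurable
    apply Real.measurable_log.comp
    have : Continuous fun θ : ℝ => ‖1 - ee θ‖ := by
      apply continuous_norm.comp
      unfold ee
      fun_prop
    exact this.measurable
  apply hGint.mono_fun' hmeas
  have hmem : ∀ᵐ (x : ℝ) ∂volume.restrict (Set.uIoc (0:ℝ) 1), x ∈ Set.Ioo (0:ℝ) 1 := by
    rw [Set.uIoc_of_le zero_le_one]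
    have h2 : ∀ᵐ (x:ℝ) ∂volume.restrict (Set.Ioc (0:ℝ) 1), x ∈ Set.Ioc (0:ℝ) 1 :=
      ae_restrict_mem measurableSet_Ioc
    have h3 : ∀ᵐ (x:ℝ) ∂volume.restrict (Set.Ioc (0:ℝ) 1), x ≠ 1 := by
      refine ae_restrict_of_ae ?_
      have : ({x : ℝ | ¬ x ≠ 1} : Set ℝ) = {1} := by ext x; simp
      rw [ae_iff, this]
      exact measure_singleton 1
    filter_upwards [h2, h3] with x hx hne
    exact ⟨hx.1, lt_of_le_of_ne hx.2 hne⟩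
  filter_upwards [hmem] with x hx
  obtain ⟨hlb, hub⟩ := abs_one_sub_ee_bounds hx.1 hx.2
  have hxpos : (0:ℝ) < 4*x*(1-x) := by nlinarith [hx.1, hx.2]
  have habs_pos : (0:ℝ) < ‖1 - ee x‖ := lt_of_lt_of_le hxpos hlb
  have hup : Real.log (‖1 - ee x‖) ≤ Real.log 2 :=
    Real.log_le_log habs_pos hub
  have hlow : Real.log (4*x*(1-x)) ≤ Real.log (‖1 - ee x‖) :=
    Real.log_le_log hxpos hlb
  have hsplit : Real.log (4*x*(1-x)) = Real.log 4 + Real.log x + Real.log (1-x) := by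
    rw [Real.log_mul (mul_pos four_pos hx.1).ne' (sub_pos.2 hx.2).ne',
      Real.log_mul (by norm_num) hx.1.ne']
  have hprod_le_one : Real.log (4*x*(1-x)) ≤ 0 := by
    apply Real.log_nonpos hxpos.le
    nlinarith [sq_nonneg (2*x-1)]
  simp only [Real.norm_eq_abs]
  rw [abs_le]
  constructor
  · rw [hG]
    simp only
    rw [← hsplit]
    nlinarith [Real.log_pos (by norm_num : (1:ℝ) < 2)]
  · rw [hG]
    simp only
    rw [← hsplit]
    nlinarith [Real.log_pos (by norm_num : (1:ℝ) < 2)]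

lemma ee_periodic : Function.Periodic ee 1 := by
  intro θ
  unfold ee
  push_cast
  rw [mul_add, Complex.exp_add, mul_one, Complex.exp_two_pi_mul_I, mul_one]

lemma ee_half_shift (θ : ℝ) : ee (θ + 1/2) = - ee θ := by
  unfold ee
  push_cast
  rw [mul_add, Complex.exp_add]
  have : 2 * ↑π * Complex.I * (1/2 : ℂ) = ↑π * Complex.I := by ring
  rw [this, Complex.exp_pi_mul_I]
  ring

lemma ee_double (θ : ℝ) : ee (2 * θ) = ee θ ^ 2 := by
  unfold ee
  push_cast
  rw [sq, ← Complex.exp_add]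
  ring_nf

lemma J_zero : ∫ θ in (0:ℝ)..1, Real.log (‖1 - ee θ‖) = 0 := by
  set h : ℝ → ℝ := fun θ => Real.log (‖1 - ee θ‖) with hh
  have hper : Function.Periodic h 1 := fun θ => by simp [hh, ee_periodic θ]
  have hint01 : IntervalIntegrable h volume 0 1 := h_integrable
  have hint12 : IntervalIntegrable h volume 1 2 := by
    have h2 := hint01.comp_sub_right 1
    have heq : (fun x => h (x - 1)) = h := funext fun x => hper.sub_eq x
    rw [heq] at h2
    norm_num at h2
    exact h2
  have hint02 : IntervalIntegrable h volume 0 2 := hint01.trans hint12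
  have hintHalf : IntervalIntegrable h volume (1/2) (3/2) := by
    apply hint02.mono_set
    rw [Set.uIcc_of_le (by norm_num : (1:ℝ)/2 ≤ 3/2), Set.uIcc_of_le (by norm_num : (0:ℝ) ≤ 2)]
    exact Set.Icc_subset_Icc (by norm_num) (by norm_num)
  have hintShift : IntervalIntegrable (fun θ => h (θ + 1/2)) volume 0 1 := by
    have := hintHalf.comp_add_right (1/2)
    norm_num at this
    exact this
  -- Step 1: ∫ h(2θ) = J
  have e1 : ∫ θ in (1:ℝ)..2, h θ = ∫ θ in (0:ℝ)..1, h θ := by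
    have := hper.intervalIntegral_add_eq 1 0
    norm_num at this
    exact this
  have e2 : (∫ θ in (0:ℝ)..1, h θ) + ∫ θ in (1:ℝ)..2, h θ = ∫ θ in (0:ℝ)..2, h θ :=
    intervalIntegral.integral_add_adjacent_intervals hint01 hint12
  have hsum : ∫ θ in (0:ℝ)..1, h (2*θ) = ∫ θ in (0:ℝ)..1, h θ := by
    rw [intervalIntegral.integral_comp_mul_left h two_ne_zero]
    norm_num
    linarith
  -- Step 2: a.e. doubling identity
  have hS : volume {θ : ℝ | ee θ = 1 ∨ ee θ = -1} = 0 := by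
    refine measure_mono_null ?_
      ((Set.countable_range (fun n : ℤ => (n:ℝ)/2)).measure_zero _)
    intro θ hθ
    have hsq : ee θ ^ 2 = 1 := by
      rcases hθ with h' | h' <;> rw [h'] <;> ring
    rw [← ee_double] at hsq
    rw [ee, Complex.exp_eq_one_iff] at hsq
    obtain ⟨n, hn⟩ := hsq
    refine ⟨n, ?_⟩
    have h2 : ((2:ℂ) * θ) = n := by
      have hne : (2 * (π:ℂ) * Complex.I) ≠ 0 := by
        simp [Real.pi_ne_zero, Complex.I_ne_zero]
      apply mul_left_cancel₀ hne
      push_cast at hn ⊢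
      linear_combination hn
    have h3 : (2:ℝ) * θ = n := by exact_mod_cast h2
    linarith
  have hae : ∀ᵐ θ : ℝ, h (2*θ) = h θ + h (θ + 1/2) := by
    have h1 : ∀ᵐ θ : ℝ, ¬(ee θ = 1 ∨ ee θ = -1) := by
      rw [ae_iff, show {a : ℝ | ¬¬(ee a = 1 ∨ ee a = -1)} = {θ : ℝ | ee θ = 1 ∨ ee θ = -1}
        from by simp only [not_not]]
      exact hS
    filter_upwards [h1] with θ hθ
    push_neg at hθ
    have hne1 : (1:ℂ) - ee θ ≠ 0 := sub_ne_zero.2 (fun hc => hθ.1 hc.symm)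
    have hne2 : (1:ℂ) + ee θ ≠ 0 := fun hc => hθ.2 (by linear_combination hc)
    have hid : (1:ℂ) - ee (2*θ) = (1 - ee θ) * (1 + ee θ) := by
      rw [ee_double]; ring
    have hid2 : (1:ℂ) - ee (θ + 1/2) = 1 + ee θ := by
      rw [ee_half_shift]; ring
    simp only [hh, hid, hid2, norm_mul]
    rw [Real.log_mul (norm_ne_zero_iff.mpr hne1) (norm_ne_zero_iff.mpr hne2)]
  have e3 : ∫ θ in (0:ℝ)..1, h (2*θ) = ∫ θ in (0:ℝ)..1, (h θ + h (θ + 1/2)) :=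
    intervalIntegral.integral_congr_ae (hae.mono fun θ hθ _ => hθ)
  have e4 : ∫ θ in (0:ℝ)..1, (h θ + h (θ + 1/2)) =
      (∫ θ in (0:ℝ)..1, h θ) + ∫ θ in (0:ℝ)..1, h (θ + 1/2) :=
    intervalIntegral.integral_add hint01 hintShift
  have e5 : ∫ θ in (0:ℝ)..1, h (θ + 1/2) = ∫ θ in (0:ℝ)..1, h θ := by
    rw [intervalIntegral.integral_comp_add_right h (1/2)]
    have := hper.intervalIntegral_add_eq (1/2) 0
    norm_num at this ⊢
    exact this
  rw [e3, e4, e5] at hsum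
  linarith

lemma abs_ee (θ : ℝ) : ‖ee θ‖ = 1 := by
  rw [ee, Complex.norm_exp]
  norm_num

lemma ee_add (a b : ℝ) : ee (a + b) = ee a * ee b := by
  unfold ee
  rw [← Complex.exp_add]
  push_cast
  ring_nf

lemma abs_conj_trick (α : ℂ) (θ : ℝ) :
    ‖α - ee θ‖ = ‖1 - (starRingEnd ℂ) α * ee θ‖ := by
  have hmc : ee θ * (starRingEnd ℂ) (ee θ) = 1 := by
    rw [Complex.mul_conj, Complex.normSq_eq_norm_sq, abs_ee]
    norm_num
  have hid : (1:ℂ) - (starRingEnd ℂ) α * ee θ = ee θ * (starRingEnd ℂ) (ee θ - α) := by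
    rw [map_sub, mul_sub, hmc]
    ring
  rw [hid, norm_mul, abs_ee, Complex.norm_conj, one_mul, norm_sub_rev]

/-- Jensen's formula: for any complex number `α`,
`∫₀¹ log |α − e^{2πiθ}| dθ = log max{1, |α|}`. -/
theorem jensen_formula (α : ℂ) :
    ∫ θ in (0:ℝ)..1, Real.log ‖α - Complex.exp (2 * Real.pi * Complex.I * θ)‖ =
      Real.log (max 1 ‖α‖) := by
  have hee : ∀ θ : ℝ, Complex.exp (2 * Real.pi * Complex.I * θ) = ee θ := fun _ => rfl
  simp_rw [hee]
  rcases lt_trichotomy (‖α‖) 1 with hlt | heq1 | hgt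
  · rw [max_eq_left hlt.le, Real.log_one]
    simp_rw [abs_conj_trick α]
    exact meanvalue (by rwa [Complex.norm_conj])
  · rw [heq1, max_self, Real.log_one]
    set φ := Complex.arg α / (2*π) with hφ
    have hα : α = ee φ := by
      have h1 : (2:ℂ) * π * Complex.I * (φ:ℝ) = Complex.arg α * Complex.I := by
        rw [hφ]
        push_cast
        have hπ : (π:ℂ) ≠ 0 := by exact_mod_cast Real.pi_ne_zero
        field_simp
      rw [ee, h1]
      have := Complex.norm_mul_exp_arg_mul_I α
      rw [heq1] at this
      simpa using this.symm
    have hpt : ∀ θ : ℝ, ‖α - ee θ‖ = ‖1 - ee (θ - φ)‖ := by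
      intro θ
      have : α - ee θ = ee φ * (1 - ee (θ - φ)) := by
        rw [mul_sub, mul_one, ← ee_add, ← hα]
        norm_num
      rw [this, norm_mul, abs_ee, one_mul]
    simp_rw [hpt]
    rw [intervalIntegral.integral_comp_sub_right (fun θ => Real.log (‖1 - ee θ‖)) φ]
    have hper : Function.Periodic (fun θ => Real.log (‖1 - ee θ‖)) 1 :=
      fun θ => by simp [ee_periodic θ]
    have hshift := hper.intervalIntegral_add_eq (0 - φ) 0
    rw [show (0:ℝ) - φ + 1 = 1 - φ by ring, zero_add] at hshift
    rw [hshift]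
    exact J_zero
  · rw [max_eq_right hgt.le]
    have hα0 : α ≠ 0 := by
      intro hc
      rw [hc] at hgt
      simp at hgt
      linarith
    have habs0 : ‖α‖ ≠ 0 := norm_ne_zero_iff.mpr hα0
    have hinv : ‖α⁻¹‖ < 1 := by
      rw [norm_inv]
      exact inv_lt_one_of_one_lt₀ hgt
    have hne : ∀ θ : ℝ, ‖1 - α⁻¹ * ee θ‖ ≠ 0 := by
      intro θ
      apply norm_ne_zero_iff.mpr
      intro hc
      have h1 : ‖α⁻¹ * ee θ‖ = 1 := by
        have : α⁻¹ * ee θ = 1 := by linear_combination -hc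
        rw [this]; simp
      rw [norm_mul, abs_ee, mul_one] at h1
      rw [h1] at hinv
      exact lt_irrefl _ hinv
    have hpt : ∀ θ : ℝ, Real.log (‖α - ee θ‖) =
        Real.log (‖α‖) + Real.log (‖1 - α⁻¹ * ee θ‖) := by
      intro θ
      have hsp : α - ee θ = α * (1 - α⁻¹ * ee θ) := by
        field_simp
      rw [hsp, norm_mul, Real.log_mul habs0 (hne θ)]
    simp_rw [hpt]
    have hcont : Continuous fun θ : ℝ => Real.log (‖1 - α⁻¹ * ee θ‖) := by
      rw [continuous_iff_continuousAt]
      intro θ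
      have hg : ContinuousAt (fun θ : ℝ => ‖1 - α⁻¹ * ee θ‖) θ := by
        apply Continuous.continuousAt
        apply continuous_norm.comp
        unfold ee
        fun_prop
      exact ContinuousAt.comp (g := Real.log)
        (f := fun θ : ℝ => ‖1 - α⁻¹ * ee θ‖) (Real.continuousAt_log (hne θ)) hg
    rw [intervalIntegral.integral_add (intervalIntegrable_const) (hcont.intervalIntegrable 0 1),
      meanvalue hinv, add_zero]
    simp
end

section
/- Let f be a real polynomial with no root on the unit circle, with roots α₁,…,α_d (with multiplicity) and leading coefficient c₀. Then |Res(f, t^r − 1)|^{1/r} converges to the Mahler measure M(f) = |c₀| ∏ max{1, |α_i|} as r → ∞. -/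
open Polynomial Filter Matrix

/-- The Sylvester matrix of two polynomials. -/
noncomputable def sylvester {R : Type} [CommRing R] (f g : R[X]) :
    Matrix (Fin (f.natDegree + g.natDegree)) (Fin (f.natDegree + g.natDegree)) R :=
  Matrix.of fun i j =>
    if (i : ℕ) < g.natDegree then
      (if (i : ℕ) ≤ (j : ℕ) ∧ (j : ℕ) ≤ (i : ℕ) + f.natDegree
        then f.coeff (f.natDegree + (i : ℕ) - (j : ℕ)) else 0)
    else
      (if (i : ℕ) - g.natDegree ≤ (j : ℕ) ∧ (j : ℕ) ≤ (i : ℕ)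
        then g.coeff ((i : ℕ) - (j : ℕ)) else 0)

/-- The resultant of two polynomials, as the determinant of the Sylvester matrix. -/
noncomputable def resultant {R : Type} [CommRing R] (f g : R[X]) : R :=
  (_root_.sylvester f g).det

/-- The Mahler measure of a real polynomial: `|c₀| ∏ max{1, |αᵢ|}` over its
complex roots `αᵢ` (with multiplicity), `c₀` the leading coefficient. -/
noncomputable def mahlerMeasure (f : ℝ[X]) : ℝ :=
  |f.leadingCoeff| * (((f.map Complex.ofRealHom).roots).map
    (fun a => max 1 ‖a‖)).prod

noncomputable def Complex.abs : AbsoluteValue ℂ ℝ := NormedField.toAbsoluteValue ℂ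

lemma Complex.abs_apply' (z : ℂ) : Complex.abs z = ‖z‖ := rfl

lemma Complex.norm_eq_abs (z : ℂ) : ‖z‖ = Complex.abs z := rfl

lemma Complex.abs_ofReal (r : ℝ) : Complex.abs (r : ℂ) = |r| := by
  show ‖(r : ℂ)‖ = |r|
  simp

lemma Complex.continuous_abs : Continuous Complex.abs := continuous_norm

private lemma abs_det_submatrix {I J : Type} [Fintype I] [DecidableEq I]
    [Fintype J] [DecidableEq J] (M : Matrix J J ℂ) (e f : I ≃ J) :
    Complex.abs ((M.submatrix e f).det) = Complex.abs M.det := by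
  have h : M.submatrix e f = (M.submatrix f f).submatrix (⇑(e.trans f.symm)) id := by
    ext i j; simp [Matrix.submatrix]
  rw [h, Matrix.det_permute (e.trans f.symm) (M.submatrix f f),
    Matrix.det_submatrix_equiv_self]
  rcases Int.units_eq_one_or (Equiv.Perm.sign (e.trans f.symm)) with hs | hs <;>
    simp [hs]

private lemma multiset_prod_tendsto {β : Type} (R : Multiset β)
    (φ : β → ℕ → ℝ) (ψ : β → ℝ)
    (h : ∀ α ∈ R, Tendsto (φ α) atTop (nhds (ψ α))) :
    Tendsto (fun r : ℕ => (R.map (fun α => φ α r)).prod) atTop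
      (nhds ((R.map ψ).prod)) := by
  induction R using Multiset.induction_on with
  | empty => simpa using tendsto_const_nhds
  | cons a s ih =>
    simp only [Multiset.map_cons, Multiset.prod_cons]
    exact ((h a (Multiset.mem_cons_self a s)).mul
      (ih (fun α hα => h α (Multiset.mem_cons_of_mem hα))))

private lemma fsum (F : ℂ[X]) (n r i : ℕ) (hn : F.natDegree = n) (hi : i < r) (x : ℂ) :
    ∑ j ∈ Finset.range (n + r),
      (if i ≤ j ∧ j ≤ i + n then F.coeff (n + i - j) else 0) * x ^ (n + r - 1 - j)
      = x ^ (r - 1 - i) * F.eval x := by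
  have h1 : ∑ j ∈ Finset.range (n + r),
      (if i ≤ j ∧ j ≤ i + n then F.coeff (n + i - j) else 0) * x ^ (n + r - 1 - j)
      = ∑ j ∈ Finset.Icc i (i + n), F.coeff (n + i - j) * x ^ (n + r - 1 - j) := by
    rw [← Finset.sum_subset (s₁ := Finset.Icc i (i+n))]
    · apply Finset.sum_congr rfl
      intro j hj
      rw [Finset.mem_Icc] at hj
      rw [if_pos hj]
    · intro j hj
      rw [Finset.mem_Icc] at hj
      rw [Finset.mem_range]
      omega
    · intro j _ hj
      rw [Finset.mem_Icc] at hj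
      rw [if_neg hj, zero_mul]
  rw [h1, ← Finset.Ico_add_one_right_eq_Icc, Finset.sum_Ico_eq_sum_range]
  have h2 : i + n + 1 - i = n + 1 := by omega
  rw [h2]
  rw [← Finset.sum_range_reflect]
  have h3 : ∀ j ∈ Finset.range (n + 1),
      F.coeff (n + i - (i + (n + 1 - 1 - j))) * x ^ (n + r - 1 - (i + (n + 1 - 1 - j)))
      = x ^ (r - 1 - i) * (F.coeff j * x ^ j) := by
    intro j hj
    rw [Finset.mem_range] at hj
    have e1 : n + i - (i + (n + 1 - 1 - j)) = j := by omega
    have e2 : n + r - 1 - (i + (n + 1 - 1 - j)) = (r - 1 - i) + j := by omega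
    rw [e1, e2, pow_add]; ring
  rw [Finset.sum_congr rfl h3, ← Finset.mul_sum]
  congr 1
  rw [eval_eq_sum_range, hn]

private lemma gsum (n r t : ℕ) (hr : 0 < r) (ht : t < n) (x : ℂ) (hx : x ^ r = 1) :
    ∑ j ∈ Finset.range (n + r),
      (if r + t - r ≤ j ∧ j ≤ r + t then ((X ^ r - 1 : ℂ[X]).coeff (r + t - j)) else 0)
        * x ^ (n + r - 1 - j) = 0 := by
  have hc : ∀ s : ℕ, (X ^ r - 1 : ℂ[X]).coeff s
      = (if s = r then 1 else 0) - (if s = 0 then 1 else 0) := by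
    intro s
    rw [coeff_sub, coeff_X_pow, coeff_one]
  have hpt : ∀ j ∈ Finset.range (n + r),
      (if r + t - r ≤ j ∧ j ≤ r + t then ((X ^ r - 1 : ℂ[X]).coeff (r + t - j)) else 0)
        * x ^ (n + r - 1 - j)
      = (if j = t then x ^ (n + r - 1 - t) else 0)
        - (if j = r + t then x ^ (n - 1 - t) else 0) := by
    intro j hj
    rw [Finset.mem_range] at hj
    rcases eq_or_ne j t with h1 | h1
    · subst h1
      have : r + j - r ≤ j ∧ j ≤ r + j := by omega
      rw [if_pos this, hc]
      have e1 : r + j - j = r := by omega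
      rw [e1, if_pos rfl, if_neg hr.ne', if_pos rfl, if_neg (by omega : ¬ j = r + j)]
      ring
    · rcases eq_or_ne j (r + t) with h2 | h2
      · subst h2
        have : r + t - r ≤ r + t ∧ r + t ≤ r + t := by omega
        rw [if_pos this, hc]
        have e1 : r + t - (r + t) = 0 := by omega
        rw [e1, if_neg (by omega : ¬ (0:ℕ) = r), if_pos rfl, if_neg (by omega : ¬ r + t = t), if_pos rfl]
        have e2 : n + r - 1 - (r + t) = n - 1 - t := by omega
        rw [e2]; ring
      · rcases Decidable.em (r + t - r ≤ j ∧ j ≤ r + t) with h3 | h3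
        · rw [if_pos h3, hc, if_neg (by omega), if_neg (by omega), if_neg h1, if_neg h2]
          ring
        · rw [if_neg h3, if_neg h1, if_neg h2]
          ring
  rw [Finset.sum_congr rfl hpt, Finset.sum_sub_distrib,
    Finset.sum_ite_eq' (Finset.range (n + r)) t,
    Finset.sum_ite_eq' (Finset.range (n + r)) (r + t),
    if_pos (by rw [Finset.mem_range]; omega), if_pos (by rw [Finset.mem_range]; omega)]
  have e : n + r - 1 - t = (n - 1 - t) + r := by omega
  rw [e, pow_add, hx, mul_one, sub_self]

private lemma abs_det_sylvester (F : ℂ[X]) (r : ℕ) (hr : 0 < r) (ζ : ℂ)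
    (hζ : IsPrimitiveRoot ζ r) :
    Complex.abs (_root_.sylvester F (X ^ r - 1 : ℂ[X])).det
      = ∏ k : Fin r, Complex.abs (F.eval (ζ ^ (k : ℕ))) := by
  classical
  have hd : (X ^ r - 1 : ℂ[X]).natDegree = r := by
    have h := natDegree_X_pow_sub_C (n := r) (r := (1 : ℂ))
    rwa [Polynomial.C_1] at h
  set n := F.natDegree with hn
  set S := _root_.sylvester F (X ^ r - 1 : ℂ[X]) with hS
  set z : Fin r → ℂ := fun k => ζ ^ (k : ℕ) with hz
  have hz1 : ∀ k : Fin r, (z k) ^ r = 1 := by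
    intro k
    rw [hz, ← pow_mul, mul_comm, pow_mul, hζ.pow_eq_one, one_pow]
  set ρ : Fin r ⊕ Fin n ≃ Fin (n + (X ^ r - 1 : ℂ[X]).natDegree) :=
    finSumFinEquiv.trans (finCongr (by rw [hd]; omega)) with hρ
  set σ : Fin r ⊕ Fin n ≃ Fin (n + (X ^ r - 1 : ℂ[X]).natDegree) :=
    (Equiv.sumComm (Fin r) (Fin n)).trans
      (finSumFinEquiv.trans (finCongr (by rw [hd]))) with hσ
  have hρl : ∀ i : Fin r, ((ρ (Sum.inl i)) : ℕ) = (i : ℕ) := by intro i; simp [hρ]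
  have hρr : ∀ t : Fin n, ((ρ (Sum.inr t)) : ℕ) = r + (t : ℕ) := by intro t; simp [hρ]
  have hσl : ∀ k : Fin r, ((σ (Sum.inl k)) : ℕ) = n + (k : ℕ) := by intro k; simp [hσ]
  have hσr : ∀ m : Fin n, ((σ (Sum.inr m)) : ℕ) = (m : ℕ) := by intro m; simp [hσ]
  set Kbig : Matrix (Fin (n + (X ^ r - 1 : ℂ[X]).natDegree)) (Fin r ⊕ Fin n) ℂ :=
    Matrix.of fun j q =>
      Sum.elim (fun k : Fin r => z k ^ (n + r - 1 - (j : ℕ)))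
        (fun m : Fin n => if (j : ℕ) = (m : ℕ) then 1 else 0) q with hK
  -- the three product computations
  have hQ1 : ∀ (j : Fin (n + (X ^ r - 1 : ℂ[X]).natDegree)) (k : Fin r), (j : ℕ) < r →
      (S * Kbig) j (Sum.inl k) = z k ^ (r - 1 - (j : ℕ)) * F.eval (z k) := by
    intro j k hj
    obtain ⟨jv, hje, hjlt⟩ : ∃ jv : ℕ, (j : ℕ) = jv ∧ jv < r := ⟨j, rfl, hj⟩
    set gfun : ℕ → ℂ := fun m =>
      (if jv ≤ m ∧ m ≤ jv + n then F.coeff (n + jv - m) else 0)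
        * z k ^ (n + r - 1 - m) with hg
    have hterm : ∀ j' : Fin (n + (X ^ r - 1 : ℂ[X]).natDegree),
        S j j' * Kbig j' (Sum.inl k) = gfun (j' : ℕ) := by
      intro j'
      simp only [hS, _root_.sylvester, Matrix.of_apply, hK, Sum.elim_inl, hg]
      rw [if_pos (lt_of_lt_of_le hj hd.ge), hje]
    rw [Matrix.mul_apply, hje]
    calc ∑ j', S j j' * Kbig j' (Sum.inl k)
        = ∑ j' : Fin (n + (X ^ r - 1 : ℂ[X]).natDegree), gfun (j' : ℕ) :=
          Finset.sum_congr rfl (fun j' _ => hterm j')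
      _ = ∑ m ∈ Finset.range (n + (X ^ r - 1 : ℂ[X]).natDegree), gfun m :=
          Fin.sum_univ_eq_sum_range gfun _
      _ = z k ^ (r - 1 - jv) * F.eval (z k) := by
          rw [show n + (X ^ r - 1 : ℂ[X]).natDegree = n + r from by rw [hd]]
          exact fsum F n r jv hn.symm hjlt (z k)
  have hQ2 : ∀ (j : Fin (n + (X ^ r - 1 : ℂ[X]).natDegree)) (k : Fin r), r ≤ (j : ℕ) →
      (S * Kbig) j (Sum.inl k) = 0 := by
    intro j k hj
    have hjlt' : (j : ℕ) < n + r := by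
      have h := j.is_lt
      omega
    obtain ⟨jv, hje, hjge, hjlt⟩ : ∃ jv : ℕ, (j : ℕ) = jv ∧ r ≤ jv ∧ jv < n + r :=
      ⟨j, rfl, hj, hjlt'⟩
    set gfun : ℕ → ℂ := fun m =>
      (if r + (jv - r) - r ≤ m ∧ m ≤ r + (jv - r)
        then ((X ^ r - 1 : ℂ[X]).coeff (r + (jv - r) - m)) else 0)
        * z k ^ (n + r - 1 - m) with hg
    have hdj : (j : ℕ) - (X ^ r - 1 : ℂ[X]).natDegree = jv - r := by
      rw [hje]; rw [hd]
    have hterm : ∀ j' : Fin (n + (X ^ r - 1 : ℂ[X]).natDegree),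
        S j j' * Kbig j' (Sum.inl k) = gfun (j' : ℕ) := by
      intro j'
      simp only [hS, _root_.sylvester, Matrix.of_apply, hK, Sum.elim_inl, hg]
      rw [if_neg (not_lt.mpr (hd.le.trans hj))]
      have hiff : ((j : ℕ) - (X ^ r - 1 : ℂ[X]).natDegree ≤ (j' : ℕ) ∧ (j' : ℕ) ≤ (j : ℕ))
          ↔ (r + (jv - r) - r ≤ (j' : ℕ) ∧ (j' : ℕ) ≤ r + (jv - r)) := by
        rw [hdj, hje]
        constructor <;> (rintro ⟨h1, h2⟩; exact ⟨by omega, by omega⟩)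
      have hval : (X ^ r - 1 : ℂ[X]).coeff ((j : ℕ) - (j' : ℕ))
          = (X ^ r - 1 : ℂ[X]).coeff (r + (jv - r) - (j' : ℕ)) := by
        rw [show (j : ℕ) - (j' : ℕ) = r + (jv - r) - (j' : ℕ) from by rw [hje]; omega]
      rw [if_congr hiff hval rfl]
    rw [Matrix.mul_apply]
    calc ∑ j', S j j' * Kbig j' (Sum.inl k)
        = ∑ j' : Fin (n + (X ^ r - 1 : ℂ[X]).natDegree), gfun (j' : ℕ) :=
          Finset.sum_congr rfl (fun j' _ => hterm j')
      _ = ∑ m ∈ Finset.range (n + (X ^ r - 1 : ℂ[X]).natDegree), gfun m :=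
          Fin.sum_univ_eq_sum_range gfun _
      _ = 0 := by
          rw [show n + (X ^ r - 1 : ℂ[X]).natDegree = n + r from by rw [hd]]
          exact gsum n r (jv - r) hr (by omega) (z k) (hz1 k)
  have hQ3 : ∀ (j : Fin (n + (X ^ r - 1 : ℂ[X]).natDegree)) (m : Fin n),
      (S * Kbig) j (Sum.inr m) = S j (σ (Sum.inr m)) := by
    intro j m
    rw [Matrix.mul_apply]
    rw [Finset.sum_eq_single (σ (Sum.inr m))]
    · simp [hK, hσr]
    · intro j' _ hne
      simp only [hK, Matrix.of_apply, Sum.elim_inr]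
      rw [if_neg, mul_zero]
      intro hv
      exact hne (Fin.ext (by rw [hv, hσr]))
    · intro h
      exact absurd (Finset.mem_univ _) h
  -- the blocks
  set W : Matrix (Fin r) (Fin r) ℂ := Matrix.of fun t k => z k ^ (r - 1 - (t : ℕ)) with hW
  set W₁ : Matrix (Fin n) (Fin r) ℂ :=
    Matrix.of fun m k => z k ^ (n + r - 1 - (m : ℕ)) with hW₁
  set A : Matrix (Fin r) (Fin r) ℂ :=
    Matrix.of fun i k => z k ^ (r - 1 - (i : ℕ)) * F.eval (z k) with hA
  set MM : Matrix (Fin n) (Fin n) ℂ :=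
    Matrix.of fun t m => if (t : ℕ) ≤ (m : ℕ) ∧ (m : ℕ) ≤ r + (t : ℕ)
      then (X ^ r - 1 : ℂ[X]).coeff (r + (t : ℕ) - (m : ℕ)) else 0 with hMM
  set B : Matrix (Fin r) (Fin n) ℂ :=
    Matrix.of fun i m => ((S * Kbig).submatrix ρ id) (Sum.inl i) (Sum.inr m) with hB
  have hKP : Kbig.submatrix σ id = Matrix.fromBlocks W 0 W₁ 1 := by
    ext p q
    rcases p with t | m <;> rcases q with k | m'
    · simp only [Matrix.submatrix_apply, hK, Matrix.of_apply, Sum.elim_inl,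
        Matrix.fromBlocks_apply₁₁, hW, id]
      rw [hσl t]
      congr 1
      have := t.is_lt
      omega
    · simp only [Matrix.submatrix_apply, hK, Matrix.of_apply, Sum.elim_inr,
        Matrix.fromBlocks_apply₁₂, id, Matrix.zero_apply]
      rw [hσl t, if_neg]
      have h2 := m'.is_lt
      omega
    · simp only [Matrix.submatrix_apply, hK, Matrix.of_apply, Sum.elim_inl,
        Matrix.fromBlocks_apply₂₁, hW₁, id]
      rw [hσr m]
    · simp only [Matrix.submatrix_apply, hK, Matrix.of_apply, Sum.elim_inr,
        Matrix.fromBlocks_apply₂₂, id, hσr]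
      rw [Matrix.one_apply]
      by_cases h : m = m'
      · rw [if_pos (by rw [h]), if_pos h]
      · rw [if_neg (fun hv => h (Fin.ext hv)), if_neg h]
  have hP : (S * Kbig).submatrix ρ id = Matrix.fromBlocks A B 0 MM := by
    ext p q
    rcases p with i | t <;> rcases q with k | m
    · simp only [Matrix.submatrix_apply, Matrix.fromBlocks_apply₁₁, hA, Matrix.of_apply, id]
      rw [hQ1 (ρ (Sum.inl i)) k (by rw [hρl]; exact i.is_lt), hρl]
    · simp only [Matrix.fromBlocks_apply₁₂, hB, Matrix.of_apply]
    · simp only [Matrix.submatrix_apply, Matrix.fromBlocks_apply₂₁, Matrix.zero_apply, id]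
      exact hQ2 (ρ (Sum.inr t)) k (by rw [hρr]; omega)
    · simp only [Matrix.submatrix_apply, Matrix.fromBlocks_apply₂₂, id]
      rw [hQ3 (ρ (Sum.inr t)) m]
      simp only [hS, _root_.sylvester, Matrix.of_apply, hMM]
      rw [if_neg (not_lt.mpr (hd.le.trans (by rw [hρr t]; omega)))]
      have h1 := hρr t
      have h2 := hσr m
      have hdj : ((ρ (Sum.inr t)) : ℕ) - (X ^ r - 1 : ℂ[X]).natDegree = (t : ℕ) := by
        rw [h1]; rw [hd]; omega
      have hiff : (((ρ (Sum.inr t)) : ℕ) - (X ^ r - 1 : ℂ[X]).natDegree ≤ ((σ (Sum.inr m)) : ℕ)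
            ∧ ((σ (Sum.inr m)) : ℕ) ≤ ((ρ (Sum.inr t)) : ℕ))
          ↔ ((t : ℕ) ≤ (m : ℕ) ∧ (m : ℕ) ≤ r + (t : ℕ)) := by
        rw [hdj, h1, h2]
      have hval : (X ^ r - 1 : ℂ[X]).coeff (((ρ (Sum.inr t)) : ℕ) - ((σ (Sum.inr m)) : ℕ))
          = (X ^ r - 1 : ℂ[X]).coeff (r + (t : ℕ) - (m : ℕ)) := by
        rw [h1, h2]
      exact if_congr hiff hval rfl
  -- determinants
  have hdetmul : (S.submatrix ρ σ) * (Kbig.submatrix σ id) = (S * Kbig).submatrix ρ id :=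
    Matrix.submatrix_mul_equiv S Kbig ρ σ id
  have htri : MM.BlockTriangular id := by
    intro s t hlt
    have hlt' : (t : ℕ) < (s : ℕ) := hlt
    simp only [hMM, Matrix.of_apply]
    rw [if_neg]
    rintro ⟨h1, -⟩
    omega
  have hMMdet : MM.det = 1 := by
    rw [Matrix.det_of_upperTriangular htri]
    have h1 : ∀ t : Fin n, MM t t = 1 := by
      intro t
      simp only [hMM, Matrix.of_apply]
      rw [if_pos ⟨le_refl _, by omega⟩, show r + (t : ℕ) - (t : ℕ) = r by omega,
        coeff_sub, coeff_X_pow, coeff_one, if_pos rfl, if_neg hr.ne', sub_zero]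
    rw [Finset.prod_congr rfl (fun t _ => h1 t), Finset.prod_const_one]
  have hAdet : A.det = W.det * ∏ k : Fin r, F.eval (z k) := by
    have h : A = W * Matrix.diagonal (fun k => F.eval (z k)) := by
      ext i k
      rw [Matrix.mul_diagonal]
      rfl
    rw [h, Matrix.det_mul, Matrix.det_diagonal]
  have hKdet : (Kbig.submatrix σ id).det = W.det := by
    rw [hKP, Matrix.det_fromBlocks_zero₁₂, Matrix.det_one, mul_one]
  have hmain : (S.submatrix ρ σ).det * W.det = W.det * ∏ k : Fin r, F.eval (z k) := by
    have h1 : ((S.submatrix ρ σ) * (Kbig.submatrix σ id)).det = A.det * MM.det := by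
      rw [hdetmul, hP, Matrix.det_fromBlocks_zero₂₁]
    rw [Matrix.det_mul, hKdet, hAdet, hMMdet, mul_one] at h1
    exact h1
  have hWne : Complex.abs W.det ≠ 0 := by
    have hsub : W.submatrix (⇑(Fin.revPerm : Equiv.Perm (Fin r))) (⇑(Equiv.refl (Fin r)))
        = (Matrix.vandermonde z)ᵀ := by
      ext t k
      simp only [Matrix.submatrix_apply, hW, Matrix.of_apply, Matrix.transpose_apply,
        Matrix.vandermonde, Equiv.refl_apply, Fin.revPerm_apply]
      have hrv : (t.rev : ℕ) = r - ((t : ℕ) + 1) := rfl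
      have htl := t.is_lt
      rw [show r - 1 - (t.rev : ℕ) = (t : ℕ) from by rw [hrv]; omega]
    have h2 := abs_det_submatrix W (Fin.revPerm : Equiv.Perm (Fin r)) (Equiv.refl (Fin r))
    rw [hsub, Matrix.det_transpose] at h2
    rw [← h2, _root_.map_ne_zero, Matrix.det_vandermonde_ne_zero_iff]
    intro a b hab
    exact Fin.ext (hζ.pow_inj a.is_lt b.is_lt hab)
  have habs := congrArg Complex.abs hmain
  rw [_root_.map_mul, _root_.map_mul, _root_.map_prod, abs_det_submatrix S ρ σ] at habs
  exact mul_right_cancel₀ hWne (habs.trans (mul_comm _ _))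

private lemma prod_swap' {β : Type*} (r : ℕ) (R : Multiset β) (g : β → Fin r → ℝ) :
    ∏ k : Fin r, (R.map (fun α => g α k)).prod = (R.map (fun α => ∏ k : Fin r, g α k)).prod := by
  induction R using Multiset.induction_on with
  | empty => simp
  | cons a s ih => simp [Multiset.map_cons, Multiset.prod_cons, Finset.prod_mul_distrib, ih]

private lemma prod_x_sub_zeta (r : ℕ) (hr : 0 < r) (ζ : ℂ) (hζ : IsPrimitiveRoot ζ r)
    (x : ℂ) : ∏ k : Fin r, (x - ζ ^ (k : ℕ)) = x ^ r - 1 := by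
  have h2 : ∏ μ ∈ Polynomial.nthRootsFinset r (1 : ℂ), (x - μ) = x ^ r - 1 := by
    have h1 := congrArg (eval x) (Polynomial.X_pow_sub_one_eq_prod hr hζ)
    simpa [eval_prod] using h1.symm
  rw [← h2]
  haveI : NeZero r := ⟨hr.ne'⟩
  apply Finset.prod_bij (fun (k : Fin r) _ => ζ ^ (k : ℕ))
  · intro k _
    rw [Polynomial.mem_nthRootsFinset hr, ← pow_mul, mul_comm, pow_mul, hζ.pow_eq_one, one_pow]
  · intro a _ b _ hab
    exact Fin.ext (hζ.pow_inj a.is_lt b.is_lt hab)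
  · intro μ hμ
    rw [Polynomial.mem_nthRootsFinset hr] at hμ
    obtain ⟨i, hilt, hieq⟩ := hζ.eq_pow_of_pow_eq_one hμ
    exact ⟨⟨i % r, Nat.mod_lt _ hr⟩, Finset.mem_univ _, by
      rw [← hieq]
      simp only []
      conv_rhs => rw [← Nat.div_add_mod i r]
      rw [pow_add, pow_mul, hζ.pow_eq_one, one_pow, one_mul]⟩
  · intro k _
    rfl

private lemma prod_eval_roots (F : ℂ[X]) (r : ℕ) (hr : 0 < r) (ζ : ℂ)
    (hζ : IsPrimitiveRoot ζ r) :
    ∏ k : Fin r, Complex.abs (F.eval (ζ ^ (k : ℕ)))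
      = Complex.abs F.leadingCoeff ^ r
        * (F.roots.map (fun α => Complex.abs (α ^ r - 1))).prod := by
  have hsplit := (IsAlgClosed.splits F).eq_prod_roots
  have heval : ∀ x : ℂ, Complex.abs (F.eval x)
      = Complex.abs F.leadingCoeff * (F.roots.map (fun α => Complex.abs (x - α))).prod := by
    intro x
    conv_lhs => rw [hsplit]
    rw [eval_mul, eval_C, _root_.map_mul, eval_multiset_prod, _root_.map_multiset_prod, Multiset.map_map,
      Multiset.map_map]
    congr 2
    ext α
    simp
  calc ∏ k : Fin r, Complex.abs (F.eval (ζ ^ (k : ℕ)))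
      = ∏ k : Fin r, (Complex.abs F.leadingCoeff
          * (F.roots.map (fun α => Complex.abs (ζ ^ (k : ℕ) - α))).prod) :=
        Finset.prod_congr rfl (fun k _ => heval _)
    _ = Complex.abs F.leadingCoeff ^ r
          * ∏ k : Fin r, (F.roots.map (fun α => Complex.abs (ζ ^ (k : ℕ) - α))).prod := by
        rw [Finset.prod_mul_distrib, Finset.prod_const, Finset.card_univ, Fintype.card_fin]
    _ = Complex.abs F.leadingCoeff ^ r
          * (F.roots.map (fun α => ∏ k : Fin r, Complex.abs (ζ ^ (k : ℕ) - α))).prod := by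
        rw [prod_swap' r F.roots (fun α k => Complex.abs (ζ ^ (k : ℕ) - α))]
    _ = Complex.abs F.leadingCoeff ^ r
          * (F.roots.map (fun α => Complex.abs (α ^ r - 1))).prod := by
        congr 1
        refine congrArg Multiset.prod (Multiset.map_congr rfl ?_)
        intro α _
        calc ∏ k : Fin r, Complex.abs (ζ ^ (k : ℕ) - α)
            = ∏ k : Fin r, Complex.abs (α - ζ ^ (k : ℕ)) :=
              Finset.prod_congr rfl (fun k _ => Complex.abs.map_sub _ _)
          _ = Complex.abs (∏ k : Fin r, (α - ζ ^ (k : ℕ))) := (map_prod Complex.abs _ _).symm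
          _ = Complex.abs (α ^ r - 1) := by rw [prod_x_sub_zeta r hr ζ hζ α]

private lemma resultant_map (f : ℝ[X]) (r : ℕ) (hr : 0 < r) :
    Complex.ofRealHom (_root_.resultant f (X ^ r - 1)) =
      _root_.resultant (f.map Complex.ofRealHom) (X ^ r - 1 : ℂ[X]) := by
  classical
  set φ := Complex.ofRealHom with hφ
  have hinj : Function.Injective ⇑φ := fun a b h => Complex.ofReal_injective h
  have hnf : (f.map φ).natDegree = f.natDegree := natDegree_map_eq_of_injective hinj f
  have hdR : (X ^ r - 1 : ℝ[X]).natDegree = r := by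
    have h := natDegree_X_pow_sub_C (n := r) (r := (1 : ℝ))
    rwa [Polynomial.C_1] at h
  have hdC : (X ^ r - 1 : ℂ[X]).natDegree = r := by
    have h := natDegree_X_pow_sub_C (n := r) (r := (1 : ℂ))
    rwa [Polynomial.C_1] at h
  have hg : (X ^ r - 1 : ℝ[X]).map φ = (X ^ r - 1 : ℂ[X]) := by
    simp [Polynomial.map_sub, Polynomial.map_pow]
  have hEq : f.natDegree + (X ^ r - 1 : ℝ[X]).natDegree
      = (f.map φ).natDegree + (X ^ r - 1 : ℂ[X]).natDegree := by
    rw [hnf, hdR, hdC]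
  set e : Fin (f.natDegree + (X ^ r - 1 : ℝ[X]).natDegree)
      ≃ Fin ((f.map φ).natDegree + (X ^ r - 1 : ℂ[X]).natDegree) := finCongr hEq with he
  have hgc : ∀ s : ℕ, (X ^ r - 1 : ℂ[X]).coeff s = φ ((X ^ r - 1 : ℝ[X]).coeff s) := by
    intro s
    rw [← hg, coeff_map]
  have hmat : (_root_.sylvester f (X ^ r - 1)).map ⇑φ
      = (_root_.sylvester (f.map φ) (X ^ r - 1 : ℂ[X])).submatrix e e := by
    ext i j
    have h3 : ((e i : Fin _) : ℕ) = (i : ℕ) := rfl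
    have h4 : ((e j : Fin _) : ℕ) = (j : ℕ) := rfl
    simp only [Matrix.map_apply, _root_.sylvester, Matrix.of_apply, Matrix.submatrix_apply]
    rw [apply_ite φ]
    refine if_congr (by omega) ?_ ?_
    · rw [apply_ite φ, map_zero]
      refine if_congr (by omega) ?_ rfl
      rw [coeff_map]
      exact congrArg (fun s => φ (f.coeff s)) (by omega)
    · rw [apply_ite φ, map_zero]
      refine if_congr (by omega) ?_ rfl
      rw [hgc]
      exact congrArg (fun s => φ ((X ^ r - 1 : ℝ[X]).coeff s)) (by omega)
  rw [_root_.resultant, _root_.resultant, RingHom.map_det, RingHom.mapMatrix_apply, hmat, Matrix.det_submatrix_equiv_self]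

private lemma multiset_prod_pos (s : Multiset ℝ) (h : ∀ x ∈ s, 0 < x) : 0 < s.prod := by
  induction s using Multiset.induction_on with
  | empty => simp
  | cons a t ih =>
    rw [Multiset.prod_cons]
    exact mul_pos (h a (Multiset.mem_cons_self a t))
      (ih (fun x hx => h x (Multiset.mem_cons_of_mem hx)))

private lemma multiset_prod_nonneg (s : Multiset ℝ) (h : ∀ x ∈ s, 0 ≤ x) : 0 ≤ s.prod := by
  induction s using Multiset.induction_on with
  | empty => simp
  | cons a t ih =>
    rw [Multiset.prod_cons]
    exact mul_nonneg (h a (Multiset.mem_cons_self a t))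
      (ih (fun x hx => h x (Multiset.mem_cons_of_mem hx)))

/-- Proposition 2.8 (no roots on the unit circle): `|Res(f, tʳ − 1)|^{1/r}`
converges to the Mahler measure `M(f)` as `r → ∞`. -/
theorem resultant_pow_inv_tendsto_mahlerMeasure (f : ℝ[X]) (hf : f ≠ 0)
    (hcirc : ∀ z ∈ (f.map Complex.ofRealHom).roots, ‖z‖ ≠ 1) :
    Tendsto (fun r : ℕ => |_root_.resultant f (X ^ r - 1)| ^ ((1 : ℝ) / r))
      atTop (nhds (_root_.mahlerMeasure f)) := by
  classical
  have hinj : Function.Injective ⇑Complex.ofRealHom := fun a b h => Complex.ofReal_injective h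
  set F := f.map Complex.ofRealHom with hF
  set R := F.roots with hR
  set c : ℝ := |f.leadingCoeff| with hc
  have hcpos : 0 < c := abs_pos.mpr (leadingCoeff_ne_zero.mpr hf)
  have hlc : Complex.abs F.leadingCoeff = c := by
    rw [hF, Polynomial.leadingCoeff, natDegree_map_eq_of_injective hinj, coeff_map]
    exact Complex.abs_ofReal _
  -- key algebraic identity for each r ≥ 1
  have hkey : ∀ r : ℕ, 0 < r →
      |_root_.resultant f (X ^ r - 1)| = c ^ r * (R.map (fun α => Complex.abs (α ^ r - 1))).prod := by
    intro r hr
    have hζ := Complex.isPrimitiveRoot_exp r hr.ne'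
    have h1 : |_root_.resultant f (X ^ r - 1)|
        = Complex.abs (Complex.ofRealHom (_root_.resultant f (X ^ r - 1))) :=
      (Complex.abs_ofReal _).symm
    rw [h1, resultant_map f r hr]
    have h2 : _root_.resultant F (X ^ r - 1 : ℂ[X]) = (_root_.sylvester F (X ^ r - 1 : ℂ[X])).det := rfl
    rw [h2, abs_det_sylvester F r hr _ hζ, prod_eval_roots F r hr _ hζ, hlc]
  -- pointwise limits for each root
  have hroot1 : ∀ α : ℂ, Complex.abs α ≠ 1 →
      Tendsto (fun r : ℕ => Complex.abs (α ^ r - 1) / (max 1 (Complex.abs α)) ^ r)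
        atTop (nhds 1) := by
    intro α hα
    rcases lt_or_gt_of_ne hα with hlt | hgt
    · have hmax : max 1 (Complex.abs α) = 1 := max_eq_left hlt.le
      have h2 : Tendsto (fun r : ℕ => α ^ r) atTop (nhds 0) :=
        tendsto_pow_atTop_nhds_zero_of_norm_lt_one (by rwa [Complex.norm_eq_abs])
      have h3 : Tendsto (fun r : ℕ => Complex.abs (α ^ r - 1)) atTop (nhds 1) := by
        have h4 : Tendsto (fun r : ℕ => α ^ r - 1) atTop (nhds (0 - 1)) :=
          h2.sub tendsto_const_nhds
        have h5 := (Complex.continuous_abs.tendsto (0 - 1)).comp h4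
        simpa [Function.comp_def] using h5
      simpa only [hmax, one_pow, div_one] using h3
    · have hane : α ≠ 0 := by
        intro h
        rw [h] at hgt
        simp at hgt
        exact absurd hgt (by norm_num)
      have hinv : Complex.abs α⁻¹ < 1 := by
        rw [map_inv₀]
        exact inv_lt_one_of_one_lt₀ hgt
      have hmax : max 1 (Complex.abs α) = Complex.abs α := max_eq_right hgt.le
      have h2 : Tendsto (fun r : ℕ => (α⁻¹) ^ r) atTop (nhds 0) :=
        tendsto_pow_atTop_nhds_zero_of_norm_lt_one (by rwa [Complex.norm_eq_abs])
      have h3 : Tendsto (fun r : ℕ => Complex.abs (1 - (α⁻¹) ^ r)) atTop (nhds 1) := by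
        have h4 : Tendsto (fun r : ℕ => 1 - (α⁻¹) ^ r) atTop (nhds (1 - 0)) :=
          tendsto_const_nhds.sub h2
        have h5 := (Complex.continuous_abs.tendsto (1 - 0)).comp h4
        simpa [Function.comp_def] using h5
      refine h3.congr (fun r => ?_)
      rw [hmax, ← map_pow, ← map_div₀]
      congr 1
      rw [inv_pow]
      field_simp
  -- positivity of the Mahler measure
  set L := mahlerMeasure f with hL
  have hLf : L = c * (R.map (fun a => max 1 (Complex.abs a))).prod := rfl
  have hLpos : 0 < L := by
    rw [hLf]
    apply mul_pos hcpos
    apply multiset_prod_pos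
    intro x hx
    obtain ⟨a, _, rfl⟩ := Multiset.mem_map.mp hx
    exact lt_of_lt_of_le zero_lt_one (le_max_left _ _)
  -- the normalized product
  set v : ℕ → ℝ := fun r =>
    (R.map (fun α => Complex.abs (α ^ r - 1) / (max 1 (Complex.abs α)) ^ r)).prod with hv
  have hvlim : Tendsto v atTop (nhds 1) := by
    have h6 := multiset_prod_tendsto R
      (fun α r => Complex.abs (α ^ r - 1) / (max 1 (Complex.abs α)) ^ r)
      (fun _ => 1) (fun α hα => hroot1 α (hcirc α hα))
    rw [show (R.map (fun _ : ℂ => (1 : ℝ))).prod = 1 by simp] at h6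
    exact h6
  have hv0 : ∀ r : ℕ, 0 ≤ v r := by
    intro r
    apply multiset_prod_nonneg
    intro x hx
    obtain ⟨a, _, rfl⟩ := Multiset.mem_map.mp hx
    positivity
  -- the expression identity
  have hexp : ∀ r : ℕ, 0 < r →
      |_root_.resultant f (X ^ r - 1)| ^ ((1 : ℝ) / r) = L * (v r) ^ ((1 : ℝ) / r) := by
    intro r hr
    have hLr : |_root_.resultant f (X ^ r - 1)| = L ^ r * v r := by
      rw [hkey r hr, hLf]
      rw [mul_pow, ← Multiset.prod_map_pow]
      rw [hv, mul_assoc, ← Multiset.prod_map_mul]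
      congr 1
      refine congrArg Multiset.prod (Multiset.map_congr rfl ?_)
      intro α _
      have hmne : (max 1 (Complex.abs α)) ^ r ≠ 0 := by positivity
      field_simp
    rw [hLr, Real.mul_rpow (by positivity) (hv0 r)]
    congr 1
    rw [← Real.rpow_natCast L r, ← Real.rpow_mul hLpos.le]
    rw [mul_one_div, div_self (by exact_mod_cast hr.ne' : (r : ℝ) ≠ 0), Real.rpow_one]
  -- final limit
  have h1 : Tendsto (fun r : ℕ => (v r) ^ ((1 : ℝ) / r)) atTop (nhds 1) := by
    have h2 : Tendsto (fun r : ℕ => (1 : ℝ) / r) atTop (nhds 0) :=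
      tendsto_one_div_atTop_nhds_zero_nat
    have h3 := hvlim.rpow h2 (Or.inl one_ne_zero)
    simpa using h3
  have hfinal : Tendsto (fun r : ℕ => L * (v r) ^ ((1 : ℝ) / r)) atTop (nhds L) := by
    simpa using tendsto_const_nhds.mul h1
  refine Tendsto.congr' ?_ hfinal
  filter_upwards [eventually_ge_atTop 1] with r hr
  exact (hexp r hr).symm
end

section
/- Let K be a field complete with respect to a non-archimedean absolute value |·|_v, and let f(t) = c₀t^n + c₁t^{n−1} + ⋯ + c_n ∈ K[t] with c₀ ≠ 0 split over K with roots λ₁,…,λ_n. Then |c₀|_v · ∏_{i=1}^n max{1, |λ_i|_v} = max_{0 ≤ j ≤ n} |c_j|_v. -/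
open Polynomial

private lemma nonarch_sub_eq {K : Type} [Field K] (v : AbsoluteValue K ℝ)
    (hv : IsNonarchimedean v) {a b : K} (h : v b < v a) : v (a - b) = v a := by
  have h1 : v (a - b) ≤ max (v a) (v b) := by
    simpa [sub_eq_add_neg] using hv a (-b)
  have h2 : v a ≤ max (v (a - b)) (v b) := by
    have := hv (a - b) b
    simpa using this
  rcases le_max_iff.mp h2 with h3 | h3
  · exact le_antisymm (le_trans h1 (max_le le_rfl h.le)) h3
  · exact absurd h3 (not_le.mpr h)

private lemma gauss_step {K : Type} [Field K] (v : AbsoluteValue K ℝ)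
    (hv : IsNonarchimedean v) (g : K[X]) (m : ℕ) (hm : g.natDegree ≤ m) (μ : K) :
    (Finset.range (m + 2)).sup' ⟨0, by simp⟩ (fun j => v ((g * (X - C μ)).coeff j)) =
      max 1 (v μ) * (Finset.range (m + 1)).sup' ⟨0, by simp⟩ (fun j => v (g.coeff j)) := by
  set p := g * (X - C μ) with hpdef
  set M := (Finset.range (m + 1)).sup' ⟨0, by simp⟩ (fun j => v (g.coeff j)) with hM
  have hp0 : p.coeff 0 = -(μ * g.coeff 0) := by
    simp [hpdef, mul_comm]
  have hpS : ∀ k, p.coeff (k + 1) = g.coeff k - μ * g.coeff (k + 1) := by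
    intro k
    have : p = g * X - C μ * g := by ring
    rw [this, coeff_sub, coeff_mul_X, coeff_C_mul]
  have hgtop : g.coeff (m + 1) = 0 :=
    coeff_eq_zero_of_natDegree_lt (lt_of_le_of_lt hm (Nat.lt_succ_self m))
  have hcoeff_le : ∀ j, j ∈ Finset.range (m + 1) → v (g.coeff j) ≤ M := fun j hj =>
    Finset.le_sup' (fun j => v (g.coeff j)) hj
  have hM0 : 0 ≤ M := le_trans (v.nonneg _) (hcoeff_le 0 (by simp))
  -- case M = 0
  rcases eq_or_lt_of_le hM0 with hMz | hMpos
  · have hg : g = 0 := by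
      ext k
      by_cases hk : k ≤ m
      · have := hcoeff_le k (Finset.mem_range.mpr (Nat.lt_succ_of_le hk))
        rw [← hMz] at this
        simpa using le_antisymm this (v.nonneg _)
      · exact coeff_eq_zero_of_natDegree_lt (lt_of_le_of_lt hm (not_le.mp hk))
    simp [hpdef, hg, ← hMz]
    exact le_antisymm (Finset.sup'_le _ _ (fun _ _ => le_rfl)) (Finset.le_sup' (fun _ => (0:ℝ)) (Finset.mem_range.mpr (by omega : 0 < m + 2)))
  -- general bound on coefficients of p
  have hbound : ∀ j ∈ Finset.range (m + 2), v (p.coeff j) ≤ max 1 (v μ) * M := by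
    intro j hj
    have hmulle : v μ * v (g.coeff j) ≤ max 1 (v μ) * M := by
      by_cases hjm : j ≤ m
      · exact mul_le_mul (le_max_right _ _) (hcoeff_le j (Finset.mem_range.mpr (Nat.lt_succ_of_le hjm)))
          (v.nonneg _) (le_trans zero_le_one (le_max_left _ _))
      · have : j = m + 1 := le_antisymm (Nat.lt_succ_iff.mp (Finset.mem_range.mp hj)) (not_le.mp hjm)
        rw [this, hgtop, v.map_zero, mul_zero]
        exact mul_nonneg (le_trans zero_le_one (le_max_left _ _)) hM0
    cases j with
    | zero =>
        rw [hp0]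
        simpa using hmulle
    | succ k =>
        rw [hpS k]
        have h1 : v (g.coeff k - μ * g.coeff (k + 1)) ≤
            max (v (g.coeff k)) (v (μ * g.coeff (k + 1))) := by
          simpa [sub_eq_add_neg] using hv (g.coeff k) (-(μ * g.coeff (k + 1)))
        refine le_trans h1 (max_le ?_ ?_)
        · have hk : k ∈ Finset.range (m + 1) := by
            have := Finset.mem_range.mp hj; exact Finset.mem_range.mpr (by omega)
          calc v (g.coeff k) ≤ M := hcoeff_le k hk
            _ = 1 * M := (one_mul M).symm
            _ ≤ max 1 (v μ) * M := mul_le_mul_of_nonneg_right (le_max_left _ _) hM0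
        · rw [v.map_mul]
          exact hmulle
  -- attained
  have hattain : ∃ j ∈ Finset.range (m + 2), v (p.coeff j) = max 1 (v μ) * M := by
    obtain ⟨j0, hj0, hj0M⟩ := Finset.exists_mem_eq_sup' (⟨0, by simp⟩ : (Finset.range (m+1)).Nonempty)
      (fun j => v (g.coeff j))
    by_cases hμ : v μ ≤ 1
    · -- choose maximal index with value M
      set T := (Finset.range (m + 1)).filter (fun j => v (g.coeff j) = M) with hT
      have hTne : T.Nonempty := ⟨j0, Finset.mem_filter.mpr ⟨hj0, hj0M.symm⟩⟩
      set j := T.max' hTne with hj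
      have hjT : j ∈ T := T.max'_mem hTne
      have hjr : j ∈ Finset.range (m + 1) := (Finset.mem_filter.mp hjT).1
      have hjval : v (g.coeff j) = M := (Finset.mem_filter.mp hjT).2
      have hnext : v (g.coeff (j + 1)) < M := by
        by_cases hjm : j + 1 ≤ m
        · rcases lt_or_eq_of_le (hcoeff_le (j + 1) (Finset.mem_range.mpr (by omega))) with h | h
          · exact h
          · exact absurd (T.le_max' (j + 1) (Finset.mem_filter.mpr
              ⟨Finset.mem_range.mpr (by omega), h⟩)) (by omega)
        · have : j + 1 = m + 1 := by have := Finset.mem_range.mp hjr; omega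
          rw [this, hgtop]
          simpa using hMpos
      refine ⟨j + 1, Finset.mem_range.mpr (by have := Finset.mem_range.mp hjr; omega), ?_⟩
      rw [hpS j, nonarch_sub_eq v hv, hjval, max_eq_left hμ, one_mul]
      rw [v.map_mul, hjval]
      calc v μ * v (g.coeff (j + 1)) ≤ 1 * v (g.coeff (j + 1)) :=
            mul_le_mul_of_nonneg_right hμ (v.nonneg _)
        _ = v (g.coeff (j + 1)) := one_mul _
        _ < M := hnext
    · -- v μ > 1 : choose minimal index with value M
      push_neg at hμ
      set T := (Finset.range (m + 1)).filter (fun j => v (g.coeff j) = M) with hT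
      have hTne : T.Nonempty := ⟨j0, Finset.mem_filter.mpr ⟨hj0, hj0M.symm⟩⟩
      set j := T.min' hTne with hj
      have hjT : j ∈ T := T.min'_mem hTne
      have hjr : j ∈ Finset.range (m + 1) := (Finset.mem_filter.mp hjT).1
      have hjval : v (g.coeff j) = M := (Finset.mem_filter.mp hjT).2
      have hmax : max 1 (v μ) = v μ := max_eq_right hμ.le
      refine ⟨j, Finset.mem_range.mpr (by have := Finset.mem_range.mp hjr; omega), ?_⟩
      cases hje : j with
      | zero =>
          rw [hje] at hjval
          rw [hp0, v.map_neg, v.map_mul, hjval, hmax]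
      | succ k =>
          rw [hje] at hjval
          have hprev : v (g.coeff k) < v μ * M := by
            have h1 : v (g.coeff k) ≤ M := by
              apply hcoeff_le
              rw [hje] at hjr
              exact Finset.mem_range.mpr (by have := Finset.mem_range.mp hjr; omega)
            calc v (g.coeff k) ≤ M := h1
              _ = 1 * M := (one_mul M).symm
              _ < v μ * M := mul_lt_mul_of_pos_right hμ hMpos
          rw [hpS k]
          have h2 : v (μ * g.coeff (k + 1) - g.coeff k) = v (μ * g.coeff (k + 1)) :=
            nonarch_sub_eq v hv (by rw [v.map_mul, hjval]; exact hprev)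
          rw [show g.coeff k - μ * g.coeff (k + 1) =
              -(μ * g.coeff (k + 1) - g.coeff k) by ring, v.map_neg, h2,
            v.map_mul, hjval, hmax]
  obtain ⟨j, hjmem, hjeq⟩ := hattain
  exact le_antisymm (Finset.sup'_le _ _ hbound) (hjeq ▸ Finset.le_sup' (fun j => v (p.coeff j)) hjmem)

/-- Lemma 4.6 (non-archimedean Gauss norm): if `f = c₀ ∏ (X − λᵢ)` splits over a
field `K` with a non-archimedean absolute value `v`, then
`v(c₀) ∏ max{1, v(λᵢ)}` equals the maximum of the `v`-values of the
coefficients of `f`. -/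
theorem nonarch_abs_leadingCoeff_mul_prod_max_eq_sup_coeff
    {K : Type} [Field K] (v : AbsoluteValue K ℝ) (hv : IsNonarchimedean v)
    (n : ℕ) (c₀ : K) (hc : c₀ ≠ 0) (l : Fin n → K) (f : K[X])
    (hf : f = C c₀ * ∏ i : Fin n, (X - C (l i))) :
    v c₀ * ∏ i : Fin n, max 1 (v (l i)) =
      (Finset.range (n + 1)).sup' (Finset.nonempty_range_iff.mpr (Nat.succ_ne_zero n))
        (fun j => v (f.coeff j)) := by
  subst hf
  induction n with
  | zero =>
      simp
  | succ n ih =>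
      set g := C c₀ * ∏ i : Fin n, (X - C (l i.castSucc)) with hg
      have hfact : C c₀ * ∏ i : Fin (n + 1), (X - C (l i)) = g * (X - C (l (Fin.last n))) := by
        rw [hg, Fin.prod_univ_castSucc, mul_assoc]
      have hdeg : g.natDegree ≤ n := by
        refine le_trans (natDegree_mul_le) ?_
        simp only [natDegree_C, zero_add]
        refine le_trans (natDegree_prod_le _ _) ?_
        simp [natDegree_X_sub_C]
      have hstep := gauss_step v hv g n hdeg (l (Fin.last n))
      have h1 : v c₀ * ∏ i : Fin (n + 1), max 1 (v (l i)) =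
          max 1 (v (l (Fin.last n))) * (v c₀ * ∏ i : Fin n, max 1 (v (l i.castSucc))) := by
        rw [Fin.prod_univ_castSucc]; ring
      rw [hfact, h1, ih (fun i => l i.castSucc)]
      exact hstep.symm
end

section
/- Let m ≥ 1 and consider the ℤ[t,t⁻¹]-module M = ℤ[t,t⁻¹]/(m(t−1)). Then for every positive integer r, the quotient M/(t^r − 1)M is isomorphic as an abelian group to ℤ ⊕ (ℤ/m)^{r−1}; in particular its torsion subgroup has order m^{r−1}. -/
open LaurentPolynomial

noncomputable section LQIAux

namespace LQI

abbrev sg (n a : ℤ) : LaurentPolynomial ℤ := AddMonoidAlgebra.single n a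

lemma T_eq (n : ℤ) : (T n : LaurentPolynomial ℤ) = sg n 1 := rfl

lemma one_eq : (1 : LaurentPolynomial ℤ) = sg 0 1 := rfl

lemma natc (m : ℕ) : (m : LaurentPolynomial ℤ) = sg 0 (m : ℤ) := by
  have h : (AddMonoidAlgebra.single 0 (m:ℤ) : LaurentPolynomial ℤ) = C (m:ℤ) * T 0 := single_eq_C_mul_T _ _
  rw [T_zero, mul_one] at h
  rw [← map_natCast (C : ℤ →+* LaurentPolynomial ℤ) m, ← h]

lemma mulss (n k a b : ℤ) : sg n a * sg k b = sg (n+k) (a*b) := AddMonoidAlgebra.single_mul_single ..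

lemma smul_sg (c n a : ℤ) : c • sg n a = sg n (c * a) :=
  AddMonoidAlgebra.smul_single' c n a

lemma g1_eq (m : ℕ) : (m : LaurentPolynomial ℤ) * (T 1 - 1) = sg 1 (m:ℤ) - sg 0 (m:ℤ) := by
  rw [natc, T_eq, one_eq, mul_sub, mulss, mulss]
  norm_num

lemma g2_eq (r : ℕ) : (T 1 : LaurentPolynomial ℤ)^r - 1 = sg r 1 - sg 0 1 := by
  rw [T_pow, mul_one, T_eq, one_eq]

abbrev G (m r : ℕ) := ℤ × (Fin (r - 1) → ZMod m)

def v (m r : ℕ) (n : ℤ) : Fin (r - 1) → ZMod m := fun i => if (i : ℤ) + 1 ≤ n % r then 1 else 0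

def w (m r : ℕ) (n : ℤ) : G m r := (1, v m r n)

def Φ (m r : ℕ) : LaurentPolynomial ℤ →+ G m r :=
  (Finsupp.liftAddHom fun n => zmultiplesHom (G m r) (w m r n) : (ℤ →₀ ℤ) →+ G m r).comp
    AddMonoidAlgebra.coeffAddEquiv.toAddMonoidHom

lemma Φ_sg (m r : ℕ) (n a : ℤ) : Φ m r (sg n a) = a • w m r n := by
  rw [Φ]
  exact (Finsupp.liftAddHom_apply_single _ n a).trans (by simp)

lemma m_smul_v (m r : ℕ) (n : ℤ) : (m:ℤ) • v m r n = 0 := by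
  funext i
  simp only [Pi.smul_apply, zsmul_eq_mul, Int.cast_natCast, ZMod.natCast_self, zero_mul,
    Pi.zero_apply]

lemma m_smul_w (m r : ℕ) (n n' : ℤ) : (m:ℤ) • w m r n - (m:ℤ) • w m r n' = 0 := by
  have : ∀ k, (m:ℤ) • w m r k = ((m:ℤ), 0) := fun k => by
    rw [w, Prod.smul_mk, m_smul_v, smul_eq_mul, mul_one]
  rw [this, this, sub_self]

lemma w_period (m r : ℕ) (n : ℤ) : w m r (n + r) = w m r n := by
  have : (n + (r:ℤ)) % r = n % r := by
    have := Int.add_mul_emod_self_left n r 1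
    simpa using this
  unfold w v
  rw [this]

lemma Φ_mul_zero (m r : ℕ) (g : LaurentPolynomial ℤ) (h : ∀ n a : ℤ, Φ m r (sg n a * g) = 0) :
    ∀ q : LaurentPolynomial ℤ, Φ m r (q * g) = 0 := by
  have key : (Φ m r).comp (AddMonoidHom.mulRight g) = 0 := by
    apply AddMonoidAlgebra.addMonoidHom_ext
    intro n a
    exact h n a
  intro q
  exact DFunLike.congr_fun key q

def I (m r : ℕ) : Ideal (LaurentPolynomial ℤ) :=
  Ideal.span {(m : LaurentPolynomial ℤ) * (T 1 - 1), (T 1 : LaurentPolynomial ℤ) ^ r - 1}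

lemma Φ_g1 (m r : ℕ) : ∀ q, Φ m r (q * ((m : LaurentPolynomial ℤ) * (T 1 - 1))) = 0 := by
  apply Φ_mul_zero
  intro n a
  rw [g1_eq, mul_sub, mulss, mulss, map_sub, Φ_sg, Φ_sg]
  have : (a * (m:ℤ)) • w m r (n+1) - (a * (m:ℤ)) • w m r (n+0)
      = a • ((m:ℤ) • w m r (n+1) - (m:ℤ) • w m r (n+0)) := by
    rw [smul_sub, smul_smul, smul_smul]
  rw [this, m_smul_w, smul_zero]

lemma Φ_g2 (m r : ℕ) : ∀ q, Φ m r (q * ((T 1 : LaurentPolynomial ℤ)^r - 1)) = 0 := by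
  apply Φ_mul_zero
  intro n a
  rw [g2_eq, mul_sub, mulss, mulss, map_sub, Φ_sg, Φ_sg, mul_one, w_period, add_zero, sub_self]

lemma Φ_ker (m r : ℕ) : ∀ p ∈ I m r, Φ m r p = 0 := by
  intro p hp
  rw [I, Ideal.mem_span_pair] at hp
  obtain ⟨u, vv, huv⟩ := hp
  rw [← huv, map_add, Φ_g1, Φ_g2, add_zero]

/-- The map on the quotient. -/
def Φbar (m r : ℕ) : (LaurentPolynomial ℤ ⧸ I m r) →+ G m r :=
  ((Submodule.liftQ ((I m r).restrictScalars ℤ) (Φ m r).toIntLinearMap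
      (fun p hp => LinearMap.mem_ker.mpr (Φ_ker m r p hp))).comp
    ((Submodule.Quotient.restrictScalarsEquiv ℤ (I m r)).symm.toLinearMap)).toAddMonoidHom

lemma Φbar_mk (m r : ℕ) (p : LaurentPolynomial ℤ) :
    Φbar m r (Ideal.Quotient.mk (I m r) p) = Φ m r p := by
  show ((Submodule.liftQ ((I m r).restrictScalars ℤ) (Φ m r).toIntLinearMap
      (fun p hp => LinearMap.mem_ker.mpr (Φ_ker m r p hp)))
      ((Submodule.Quotient.restrictScalarsEquiv ℤ (I m r)).symm (Submodule.Quotient.mk p))) = _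
  rw [Submodule.Quotient.restrictScalarsEquiv_symm_mk, Submodule.liftQ_apply]
  rfl

lemma mk_T_r (m r : ℕ) : (T (r:ℤ) - 1 : LaurentPolynomial ℤ) ∈ I m r := by
  have : ((T 1 : LaurentPolynomial ℤ)^r - 1) ∈ I m r :=
    Ideal.subset_span (by simp)
  rwa [T_pow, mul_one] at this

lemma T_mul_mem (m r : ℕ) : ∀ k : ℤ, (T (k * r) - 1 : LaurentPolynomial ℤ) ∈ I m r := by
  intro k
  induction k using Int.induction_on with
  | zero => simp [T_zero]
  | succ k ih =>
    have : (T (((k:ℤ)+1) * r) - 1 : LaurentPolynomial ℤ)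
        = T ((k:ℤ) * r) * (T r - 1) + (T ((k:ℤ)*r) - 1) := by
      rw [mul_sub, ← T_add, mul_one]
      ring_nf
    rw [this]
    exact add_mem (Ideal.mul_mem_left _ _ (mk_T_r m r)) ih
  | pred k ih =>
    have : (T ((-(k:ℤ)-1) * r) - 1 : LaurentPolynomial ℤ)
        = (T (-(k:ℤ) * r) - 1) - T ((-(k:ℤ)-1) * r) * (T r - 1) := by
      rw [mul_sub, ← T_add, mul_one]
      ring_nf
    rw [this]
    exact sub_mem ih (Ideal.mul_mem_left _ _ (mk_T_r m r))

lemma mk_T_emod (m r : ℕ) (n : ℤ) :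
    Ideal.Quotient.mk (I m r) (T n) = Ideal.Quotient.mk (I m r) (T (n % r)) := by
  rw [Ideal.Quotient.eq]
  have hn : n = n % r + n / r * r := by
    rw [mul_comm]
    exact (Int.emod_add_mul_ediv n r).symm
  have : (T n - T (n % r) : LaurentPolynomial ℤ) = T (n % r) * (T ((n / r) * r) - 1) := by
    rw [mul_sub, ← T_add, mul_one, ← hn]
  rw [this]
  exact Ideal.mul_mem_left _ _ (T_mul_mem m r _)

def zmW (m r : ℕ) (i : Fin (r-1)) :
    {f : ℤ →+ (LaurentPolynomial ℤ ⧸ I m r) // f m = 0} :=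
  ⟨zmultiplesHom _ (Ideal.Quotient.mk (I m r) (T ((i:ℤ)+1) - T (i:ℤ))), by
    simp only [zmultiplesHom_apply]
    rw [← map_zsmul (Ideal.Quotient.mk (I m r))]
    rw [Ideal.Quotient.eq_zero_iff_mem]
    have : (m:ℤ) • (T ((i:ℤ)+1) - T (i:ℤ) : LaurentPolynomial ℤ)
        = T (i:ℤ) * ((m : LaurentPolynomial ℤ) * (T 1 - 1)) := by
      rw [zsmul_eq_mul, Int.cast_natCast, T_add]
      ring
    rw [this]
    exact Ideal.mul_mem_left _ _ (Ideal.subset_span (by simp))⟩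

def ψ (m r : ℕ) : G m r →+ (LaurentPolynomial ℤ ⧸ I m r) :=
  AddMonoidHom.mk'
    (fun g => g.1 • Ideal.Quotient.mk (I m r) 1
      + ∑ i : Fin (r-1), ZMod.lift m (zmW m r i) (g.2 i))
    (by
      intro a b
      simp only [Prod.fst_add, Prod.snd_add, Pi.add_apply, add_smul, map_add,
        Finset.sum_add_distrib]
      abel)

lemma ψ_w (m r : ℕ) (hr : 0 < r) (n : ℤ) :
    ψ m r (w m r n) = Ideal.Quotient.mk (I m r) (T n) := by
  have h0 : 0 ≤ n % r := Int.emod_nonneg n (by exact_mod_cast hr.ne')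
  have h1 : n % r < r := Int.emod_lt_of_pos n (by exact_mod_cast hr)
  set q : ℕ := (n % r).toNat with hq
  have hq' : (q : ℤ) = n % r := Int.toNat_of_nonneg h0
  have hqr : q ≤ r - 1 := by omega
  have step : ∀ i : Fin (r-1), ZMod.lift m (zmW m r i) (v m r n i)
      = if ((i:ℕ) : ℤ) + 1 ≤ n % r
        then Ideal.Quotient.mk (I m r) (T (((i:ℕ):ℤ)+1)) - Ideal.Quotient.mk (I m r) (T ((i:ℕ):ℤ))
        else 0 := by
    intro i
    by_cases h : ((i:ℕ) : ℤ) + 1 ≤ n % r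
    · rw [v, if_pos h, if_pos h]
      have : (1 : ZMod m) = ((1:ℤ) : ZMod m) := by norm_num
      rw [this, ZMod.lift_coe]
      show (zmultiplesHom _ (Ideal.Quotient.mk (I m r) (T ((i:ℤ)+1) - T (i:ℤ)))) (1:ℤ) = _
      rw [zmultiplesHom_apply, one_zsmul, map_sub]
    · rw [v, if_neg h, if_neg h, map_zero]
  rw [ψ]
  show (1:ℤ) • Ideal.Quotient.mk (I m r) 1 + ∑ i : Fin (r-1), ZMod.lift m (zmW m r i) (v m r n i)
      = _
  rw [one_smul]
  have sum_eq : ∑ i : Fin (r-1), ZMod.lift m (zmW m r i) (v m r n i)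
      = Ideal.Quotient.mk (I m r) (T (q:ℤ)) - Ideal.Quotient.mk (I m r) (T (0:ℤ)) := by
    calc ∑ i : Fin (r-1), ZMod.lift m (zmW m r i) (v m r n i)
        = ∑ i ∈ Finset.range (r-1), (if ((i:ℕ) : ℤ) + 1 ≤ n % r
            then Ideal.Quotient.mk (I m r) (T ((i:ℤ)+1)) - Ideal.Quotient.mk (I m r) (T (i:ℤ))
            else 0) := by
          rw [← Fin.sum_univ_eq_sum_range]
          exact Finset.sum_congr rfl fun i _ => step i
      _ = ∑ i ∈ (Finset.range (r-1)).filter (fun i => i < q),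
            (Ideal.Quotient.mk (I m r) (T ((i:ℤ)+1)) - Ideal.Quotient.mk (I m r) (T (i:ℤ))) := by
          rw [Finset.sum_filter]
          refine Finset.sum_congr rfl fun i _ => ?_
          congr 1
          simp only [eq_iff_iff]
          omega
      _ = ∑ i ∈ Finset.range q,
            (Ideal.Quotient.mk (I m r) (T ((i:ℤ)+1)) - Ideal.Quotient.mk (I m r) (T (i:ℤ))) := by
          congr 1
          ext a
          simp only [Finset.mem_filter, Finset.mem_range]
          omega
      _ = _ := by
          have := Finset.sum_range_sub (fun i : ℕ => Ideal.Quotient.mk (I m r) (T (i:ℤ))) q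
          simp only [Nat.cast_add, Nat.cast_one, Nat.cast_zero] at this ⊢
          rw [← this]
  rw [sum_eq, hq', T_zero]
  rw [← mk_T_emod]
  abel

lemma ψ_Φ (m r : ℕ) (hr : 0 < r) (p : LaurentPolynomial ℤ) :
    ψ m r (Φ m r p) = Ideal.Quotient.mk (I m r) p := by
  have key : (ψ m r).comp (Φ m r)
      = AddMonoidHom.mk' (fun p => Ideal.Quotient.mk (I m r) p) (map_add _) := by
    apply AddMonoidAlgebra.addMonoidHom_ext
    intro n a
    show ψ m r (Φ m r (sg n a)) = Ideal.Quotient.mk (I m r) (sg n a)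
    rw [Φ_sg, map_zsmul, ψ_w m r hr, ← map_zsmul (Ideal.Quotient.mk (I m r))]
    congr 1
    rw [T_eq, smul_sg, mul_one]
  exact DFunLike.congr_fun key p

lemma v_small (m r : ℕ) (n : ℤ) (h0 : 0 ≤ n) (h1 : n < r) (j : Fin (r-1)) :
    v m r n j = if (j:ℤ) + 1 ≤ n then 1 else 0 := by
  rw [v, Int.emod_eq_of_lt h0 h1]

lemma Φ_surj (m r : ℕ) (hm : 0 < m) (hr : 0 < r) : Function.Surjective (Φ m r) := by
  haveI : NeZero m := ⟨hm.ne'⟩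
  rintro ⟨a, u⟩
  refine ⟨sg 0 a + ∑ i : Fin (r-1), ((u i).val : ℤ) • (sg ((i:ℤ)+1) 1 - sg (i:ℤ) 1), ?_⟩
  rw [map_add, map_sum, Φ_sg]
  have hw0 : w m r 0 = (1, 0) := by
    have : v m r 0 = 0 := by
      funext j
      rw [v_small m r 0 le_rfl (by exact_mod_cast hr) j, if_neg (by omega)]
      rfl
    rw [w, this]
  have hstep : ∀ i : Fin (r-1),
      Φ m r (((u i).val : ℤ) • (sg ((i:ℤ)+1) 1 - sg (i:ℤ) 1)) = (0, Pi.single i (u i)) := by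
    intro i
    have hi1 : (0:ℤ) ≤ (i:ℤ) + 1 := by omega
    have hi2 : (i:ℤ) + 1 < r := by
      have := i.2
      omega
    have hv : v m r ((i:ℤ)+1) - v m r (i:ℤ) = Pi.single i 1 := by
      funext j
      rw [Pi.sub_apply, v_small m r _ hi1 hi2 j,
        v_small m r _ (by omega) (by omega) j]
      rcases eq_or_ne j i with rfl | hne
      · rw [if_pos (by omega), if_neg (by omega), Pi.single_eq_same, sub_zero]
      · have : ((j:ℤ)) ≠ ((i:ℤ)) := by
          simpa [Fin.ext_iff] using hne
        rw [Pi.single_eq_of_ne hne]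
        rcases lt_or_gt_of_ne this with h | h
        · rw [if_pos (by omega), if_pos (by omega), sub_self]
        · rw [if_neg (by omega), if_neg (by omega), sub_self]
    rw [map_zsmul, map_sub, Φ_sg, Φ_sg, one_smul, one_smul, w, w]
    have : ((1:ℤ), v m r ((i:ℤ)+1)) - ((1:ℤ), v m r (i:ℤ)) = ((0:ℤ), Pi.single i (1 : ZMod m)) := by
      rw [Prod.mk_sub_mk, sub_self, hv]
    rw [this, Prod.smul_mk, smul_zero]
    congr 1
    funext j
    rcases eq_or_ne j i with rfl | hne
    · rw [Pi.smul_apply, Pi.single_eq_same, Pi.single_eq_same, zsmul_eq_mul, mul_one,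
        Int.cast_natCast]
      exact ZMod.natCast_rightInverse _
    · simp [Pi.single_eq_of_ne hne]
  rw [Finset.sum_congr rfl fun i _ => hstep i, hw0]
  have : ∑ i : Fin (r-1), ((0:ℤ), Pi.single i (u i)) = ((0:ℤ), u) := by
    rw [Prod.ext_iff]
    constructor
    · rw [Prod.fst_sum]
      simp
    · simp only [Prod.snd_sum]
      exact Finset.univ_sum_single u
  rw [this, Prod.smul_mk, Prod.mk_add_mk, smul_zero, zero_add, add_zero, smul_eq_mul, mul_one]

def mainEquiv (m r : ℕ) (hm : 0 < m) (hr : 0 < r) : (LaurentPolynomial ℤ ⧸ I m r) ≃+ G m r := by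
  refine AddEquiv.ofBijective (Φbar m r) ⟨?_, ?_⟩
  · intro x y hxy
    obtain ⟨p, rfl⟩ := Ideal.Quotient.mk_surjective (I := I m r) x
    obtain ⟨q, rfl⟩ := Ideal.Quotient.mk_surjective (I := I m r) y
    rw [Φbar_mk, Φbar_mk] at hxy
    rw [← ψ_Φ m r hr p, ← ψ_Φ m r hr q, hxy]
  · intro g
    obtain ⟨p, hp⟩ := Φ_surj m r hm hr g
    exact ⟨Ideal.Quotient.mk (I m r) p, by rw [Φbar_mk, hp]⟩

def torsionCongr {A B : Type*} [AddCommGroup A] [AddCommGroup B] (e : A ≃+ B) :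
    AddCommGroup.torsion A ≃ AddCommGroup.torsion B where
  toFun x := ⟨e x, by
    obtain ⟨n, hn, h⟩ := isOfFinAddOrder_iff_nsmul_eq_zero.mp x.2
    exact isOfFinAddOrder_iff_nsmul_eq_zero.mpr ⟨n, hn, by rw [← map_nsmul, h, map_zero]⟩⟩
  invFun x := ⟨e.symm x, by
    obtain ⟨n, hn, h⟩ := isOfFinAddOrder_iff_nsmul_eq_zero.mp x.2
    exact isOfFinAddOrder_iff_nsmul_eq_zero.mpr ⟨n, hn, by rw [← map_nsmul, h, map_zero]⟩⟩
  left_inv x := Subtype.ext (e.symm_apply_apply _)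
  right_inv x := Subtype.ext (e.apply_symm_apply _)

def torsionG (m r : ℕ) (hm : 0 < m) :
    AddCommGroup.torsion (G m r) ≃ (Fin (r-1) → ZMod m) where
  toFun x := (x : G m r).2
  invFun u := ⟨((0:ℤ), u), by
    refine isOfFinAddOrder_iff_nsmul_eq_zero.mpr ⟨m, hm, ?_⟩
    rw [Prod.ext_iff]
    constructor
    · simp
    · show m • u = 0
      funext i
      rw [Pi.smul_apply, nsmul_eq_mul, ZMod.natCast_self, zero_mul]
      rfl⟩
  left_inv x := by
    apply Subtype.ext
    obtain ⟨n, hn, h⟩ := isOfFinAddOrder_iff_nsmul_eq_zero.mp x.2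
    have h1 : n • (x : G m r).1 = 0 := by
      have := congrArg Prod.fst h
      simpa using this
    have h2 : (x : G m r).1 = 0 := by
      rw [nsmul_eq_mul] at h1
      rcases mul_eq_zero.mp h1 with h | h
      · exact absurd (by exact_mod_cast h) hn.ne'
      · exact h
    rw [Prod.ext_iff]
    exact ⟨h2.symm, rfl⟩
  right_inv u := rfl

lemma card_torsion {A : Type} [AddCommGroup A] (m r : ℕ) (hm : 0 < m)
    (e : A ≃+ G m r) : Nat.card (AddCommGroup.torsion A) = m ^ (r - 1) := by
  rw [Nat.card_congr (torsionCongr e), Nat.card_congr (torsionG m r hm), Nat.card_pi]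
  simp [Nat.card_zmod]

end LQI

end LQIAux

/-- Example 4.3: for `M = ℤ[t,t⁻¹]/(m(t−1))`, the quotient `M/(tʳ−1)M`
(that is, `ℤ[t,t⁻¹]/(m(t−1), tʳ−1)`) is isomorphic as an abelian group to
`ℤ ⊕ (ℤ/m)^{r−1}`; in particular its torsion subgroup has order `m^{r−1}`. -/
theorem laurent_quotient_iso (m r : ℕ) (hm : 1 ≤ m) (hr : 0 < r) :
    Nonempty
      ((LaurentPolynomial ℤ ⧸ (Ideal.span
          {(m : LaurentPolynomial ℤ) * (T 1 - 1), (T 1 : LaurentPolynomial ℤ) ^ r - 1}))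
        ≃+ ℤ × (Fin (r - 1) → ZMod m)) ∧
    Nat.card (AddCommGroup.torsion
      (LaurentPolynomial ℤ ⧸ (Ideal.span
        {(m : LaurentPolynomial ℤ) * (T 1 - 1), (T 1 : LaurentPolynomial ℤ) ^ r - 1})))
      = m ^ (r - 1) := by
  have e : (LaurentPolynomial ℤ ⧸ LQI.I m r) ≃+ LQI.G m r := LQI.mainEquiv m r hm hr
  exact ⟨⟨e⟩, LQI.card_torsion m r hm e⟩
end

section
/- Let Φ be a monic divisor of t^r − 1 in ℤ[t] and write t^r − 1 = Φ·Ψ. Let A = Φ(C_r) where C_r is the r×r companion matrix of t^r − 1, and let R be the s×r integer matrix (s = deg Φ) whose i-th row gives the coefficients of t^{i−1}Ψ modulo t^r − 1 in the basis 1, t, …, t^{r−1}. Then RA = 0 and AR^T = 0, and R has an s×s minor invertible over ℤ. -/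
open Polynomial

lemma reverse_multiset_prod (M : Multiset ℂ[X]) : M.prod.reverse = (M.map reverse).prod := by
  induction M using Multiset.induction_on with
  | empty =>
    simp only [Multiset.prod_zero, Multiset.map_zero]
    rw [← C_1, reverse_C]
  | cons a s ih => simp [reverse_mul_of_domain, ih]

lemma reverse_X_sub_C (z : ℂ) : (X - C z).reverse = 1 - C z * X := by
  ext n
  rw [coeff_reverse, natDegree_X_sub_C]
  match n with
  | 0 => simp [revAt_le, coeff_one]
  | 1 => simp [revAt_le, coeff_one]
  | (k+2) =>
    rw [revAt_eq_self_of_lt (by omega)]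
    simp [coeff_one, coeff_X]

lemma pal {r : ℕ} (hr : 0 < r) {Φ : ℤ[X]} (hΦ : Φ.Monic)
    (hdvd : Φ ∣ X ^ r - 1) : Φ.reverse = C (Φ.coeff 0) * Φ := by
  set f : ℂ[X] := Φ.map (Int.castRingHom ℂ) with hf
  have hfm : f.Monic := hΦ.map _
  have hfdvd : f ∣ X ^ r - 1 := by
    have := Polynomial.map_dvd (Int.castRingHom ℂ) hdvd
    simpa using this
  have hsplits : f.Splits := IsAlgClosed.splits f
  have hcard : Multiset.card f.roots = f.natDegree := (splits_iff_card_roots).mp hsplits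
  have hprodf : (f.roots.map fun a => X - C a).prod = f :=
    prod_multiset_X_sub_C_of_monic_of_roots_card_eq hfm hcard
  have hpow : ∀ z ∈ f.roots, z ^ r = 1 := by
    intro z hz
    have hzr : f.IsRoot z := isRoot_of_mem_roots hz
    have h2 : ((X:ℂ[X]) ^ r - 1).IsRoot z := hzr.dvd hfdvd
    simpa [IsRoot, sub_eq_zero] using h2
  have hconj : f.map (starRingEnd ℂ) = f := by
    rw [hf, Polynomial.map_map]
    congr 1
    exact RingHom.ext_int _ _
  have hrootsconj : f.roots.map (starRingEnd ℂ) = f.roots := by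
    have h3 := hsplits.roots_map (starRingEnd ℂ)
    rw [hconj] at h3
    exact h3.symm
  have hinv : f.roots.map (fun z => z⁻¹) = f.roots := by
    conv_rhs => rw [← hrootsconj]
    refine Multiset.map_congr rfl fun z hz => ?_
    have h1 : z ^ r = 1 := hpow z hz
    have habs : ‖z‖ = 1 := by
      have h2 : ‖z‖ ^ r = 1 := by rw [← norm_pow, h1, norm_one]
      rcases lt_trichotomy (‖z‖) 1 with h | h | h
      · exfalso
        have := pow_lt_one₀ (norm_nonneg z) h hr.ne'
        rw [h2] at this; exact lt_irrefl 1 this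
      · exact h
      · exfalso
        have := one_lt_pow₀ h hr.ne'
        rw [h2] at this; exact lt_irrefl 1 this
    exact Complex.inv_eq_conj habs
  have hz0 : ∀ z ∈ f.roots, (z:ℂ) ≠ 0 := by
    intro z hz h0
    have := hpow z hz
    rw [h0, zero_pow hr.ne'] at this
    exact zero_ne_one this
  have key : f.reverse = C (f.coeff 0) * f := by
    have h6 : (f.roots.map fun z => -C z).prod = C (f.coeff 0) := by
      calc (f.roots.map fun z => -C z).prod
          = (f.roots.map fun z => C (-z)).prod := by
            congr 1; exact Multiset.map_congr rfl fun z _ => by rw [map_neg]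
        _ = C ((f.roots.map fun z => -z).prod) := by
            rw [map_multiset_prod (C : ℂ →+* ℂ[X]), Multiset.map_map]; rfl
        _ = C (eval 0 f) := by
            congr 1
            conv_rhs => rw [← hprodf]
            rw [eval_multiset_prod, Multiset.map_map]
            congr 1
            exact Multiset.map_congr rfl fun z _ => by simp
        _ = C (f.coeff 0) := by rw [coeff_zero_eq_eval_zero]
    conv_lhs => rw [← hprodf]
    rw [reverse_multiset_prod, Multiset.map_map]
    have step : f.roots.map (reverse ∘ fun a => X - C a)
        = f.roots.map (fun z => (-C z) * (X - C z⁻¹)) := by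
      refine Multiset.map_congr rfl fun z hz => ?_
      have hzz : (z : ℂ) ≠ 0 := hz0 z hz
      show (X - C z).reverse = _
      rw [reverse_X_sub_C, mul_sub, neg_mul, neg_mul, ← C_mul, mul_inv_cancel₀ hzz, C_1]
      ring
    rw [step, Multiset.prod_map_mul]
    have h4 : (f.roots.map fun z => X - C z⁻¹).prod = f := by
      have h7 : (f.roots.map fun z => X - C z⁻¹)
          = ((f.roots.map fun z => z⁻¹).map fun w => X - C w) := by
        rw [Multiset.map_map]; rfl
      rw [h7, hinv, hprodf]
    rw [h4, h6]
  -- pull back to ℤ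
  have hndeg : f.natDegree = Φ.natDegree := hΦ.natDegree_map _
  have hmaprev : Φ.reverse.map (Int.castRingHom ℂ) = f.reverse := by
    unfold reverse
    rw [hndeg]
    ext n
    simp [coeff_reflect, hf, coeff_map]
  apply Polynomial.map_injective (Int.castRingHom ℂ) Int.cast_injective
  rw [Polynomial.map_mul, map_C, hmaprev, key]
  have : f.coeff 0 = ((Int.castRingHom ℂ) (Φ.coeff 0) : ℂ) := by rw [hf, coeff_map]
  rw [this]

noncomputable def rV (r : ℕ) (p : ℤ[X]) : Fin r → ℤ := fun j => (p %ₘ (X ^ r - 1)).coeff j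

section aux
variable {r : ℕ}

lemma q_monic (hr : 0 < r) : (X ^ r - 1 : ℤ[X]).Monic := by
  simpa using monic_X_pow_sub_C (1 : ℤ) hr.ne'

lemma q_deg (hr : 0 < r) : (X ^ r - 1 : ℤ[X]).degree = r := by
  simpa using degree_X_pow_sub_C hr (1 : ℤ)

lemma rV_add (p q : ℤ[X]) : rV r (p + q) = rV r p + rV r q := by
  funext j; simp [rV, add_modByMonic]

lemma rV_C_mul (c : ℤ) (p : ℤ[X]) : rV r (C c * p) = c • rV r p := by
  funext j
  show (C c * p %ₘ (X ^ r - 1)).coeff (j : ℕ) = c • (p %ₘ (X ^ r - 1)).coeff (j : ℕ)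
  rw [← smul_eq_C_mul, smul_modByMonic]
  simp

lemma rV_eq_of_dvd_sub (hr : 0 < r) {p q : ℤ[X]} (h : (X ^ r - 1 : ℤ[X]) ∣ (p - q)) :
    rV r p = rV r q := by
  funext j; unfold rV
  have h1 := (modByMonic_eq_zero_iff_dvd (q_monic hr)).mpr h
  rw [sub_modByMonic, sub_eq_zero] at h1
  rw [h1]

lemma rV_zero_of_dvd (hr : 0 < r) {p : ℤ[X]} (h : (X ^ r - 1 : ℤ[X]) ∣ p) : rV r p = 0 := by
  funext j; unfold rV
  rw [(modByMonic_eq_zero_iff_dvd (q_monic hr)).mpr h]; simp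

lemma rV_X_pow (hr : 0 < r) (m : ℕ) :
    rV r (X ^ m) = Pi.single (⟨m % r, Nat.mod_lt _ hr⟩ : Fin r) 1 := by
  have h1 : rV r (X ^ m) = rV r (X ^ (m % r)) := by
    apply rV_eq_of_dvd_sub hr
    have he : (X : ℤ[X]) ^ m = X ^ (m % r) * (X ^ r) ^ (m / r) := by
      rw [← pow_mul, ← pow_add]
      congr 1
      exact (Nat.mod_add_div m r).symm
    rw [he]
    have : (X : ℤ[X]) ^ (m % r) * (X ^ r) ^ (m / r) - X ^ (m % r)
        = X ^ (m % r) * ((X ^ r) ^ (m / r) - 1 ^ (m / r)) := by ring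
    rw [this]
    exact Dvd.dvd.mul_left (sub_dvd_pow_sub_pow _ _ _) _
  have h2 : (X : ℤ[X]) ^ (m % r) %ₘ (X ^ r - 1) = X ^ (m % r) := by
    rw [modByMonic_eq_self_iff (q_monic hr), q_deg hr, degree_X_pow]
    exact_mod_cast Nat.mod_lt _ hr
  funext j
  rw [h1]
  show (X ^ (m % r) %ₘ (X ^ r - 1) : ℤ[X]).coeff (j : ℕ) = _
  rw [h2, coeff_X_pow, Pi.single_apply]
  by_cases h : (j : ℕ) = m % r
  · rw [if_pos h, if_pos (Fin.ext h)]
  · rw [if_neg h, if_neg (fun hc => h (by rw [hc]))]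

lemma row_eq_vecMul (hr : 0 < r) (M : Matrix (Fin r) (Fin r) ℤ) (i : Fin r) :
    M i = Matrix.vecMul (rV r (X ^ (i : ℕ))) M := by
  rw [rV_X_pow hr]
  have : (⟨(i : ℕ) % r, Nat.mod_lt _ hr⟩ : Fin r) = i := Fin.ext (Nat.mod_eq_of_lt i.isLt)
  rw [this, Matrix.single_one_vecMul]
  rfl

lemma vecMul_matrix_smul (v : Fin r → ℤ) (a : ℤ) (M : Matrix (Fin r) (Fin r) ℤ) :
    Matrix.vecMul v (a • M) = a • Matrix.vecMul v M := by
  funext j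
  show ∑ i, v i * (a • M) i j = a * ∑ i, v i * M i j
  rw [Finset.mul_sum]
  exact Finset.sum_congr rfl fun i _ => by simp [Matrix.smul_apply]; ring

section withC
variable (Cm : Matrix (Fin r) (Fin r) ℤ)
  (hC : ∀ i j, Cm i j = if (j : ℕ) = ((i : ℕ) + 1) % r then 1 else 0)

include hC

lemma vecMul_rV_Cm (hr : 0 < r) (p : ℤ[X]) :
    Matrix.vecMul (rV r p) Cm = rV r (X * p) := by
  funext j
  set g := p %ₘ (X ^ r - 1) with hg
  have hgdeg : g.degree < (r : ℕ) := by
    rw [← q_deg hr]; exact degree_modByMonic_lt p (q_monic hr)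
  have hgcoeff : ∀ m : ℕ, r ≤ m → g.coeff m = 0 := fun m hm =>
    coeff_eq_zero_of_degree_lt (lt_of_lt_of_le hgdeg (by exact_mod_cast hm))
  set c := g.coeff (r - 1) with hc
  have hXp : (X * p) %ₘ (X ^ r - 1) = X * g - C c * (X ^ r - 1) := by
    have hpg : p - g = (X ^ r - 1) * (p /ₘ (X ^ r - 1)) := by
      rw [hg, modByMonic_eq_sub_mul_div p (X ^ r - 1)]; ring
    have hdvd : (X ^ r - 1 : ℤ[X]) ∣ (X * p - (X * g - C c * (X ^ r - 1))) := by
      have heq : X * p - (X * g - C c * (X ^ r - 1))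
          = (X ^ r - 1) * (X * (p /ₘ (X ^ r - 1)) + C c) := by
        linear_combination (X : ℤ[X]) * hpg
      rw [heq]
      exact Dvd.intro _ rfl
    have hdeg2 : (X * g - C c * (X ^ r - 1)).degree < (X ^ r - 1 : ℤ[X]).degree := by
      rw [q_deg hr, degree_lt_iff_coeff_zero]
      intro m hm
      have hm' : r ≤ m := by exact_mod_cast hm
      obtain ⟨m', rfl⟩ : ∃ m', m = m' + 1 := ⟨m - 1, by omega⟩
      rw [coeff_sub, coeff_X_mul, coeff_C_mul, coeff_sub, coeff_X_pow, coeff_one]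
      by_cases hmr : m' + 1 = r
      · have : m' = r - 1 := by omega
        rw [if_pos hmr, if_neg (by omega : ¬ (m' + 1 = 0)), this]
        ring
      · rw [if_neg hmr, if_neg (by omega : ¬ (m' + 1 = 0)), hgcoeff m' (by omega)]
        ring
    have h1 := (modByMonic_eq_zero_iff_dvd (q_monic hr)).mpr hdvd
    rw [sub_modByMonic, sub_eq_zero] at h1
    rw [h1, (modByMonic_eq_self_iff (q_monic hr)).mpr hdeg2]
  have hRHS : rV r (X * p) j = if (j : ℕ) = 0 then c else g.coeff ((j : ℕ) - 1) := by
    show ((X * p) %ₘ (X ^ r - 1)).coeff (j : ℕ) = _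
    rw [hXp, coeff_sub, coeff_C_mul, coeff_sub, coeff_X_pow, coeff_one]
    rcases Nat.eq_zero_or_pos (j : ℕ) with h0 | h0
    · rw [h0, if_pos rfl, if_neg (by omega : ¬ (0 = r)), if_pos rfl, mul_coeff_zero,
        coeff_X_zero]
      ring
    · obtain ⟨j', hj'⟩ : ∃ j', (j : ℕ) = j' + 1 := ⟨(j : ℕ) - 1, by omega⟩
      rw [hj', coeff_X_mul, if_neg (by omega : ¬ (j' + 1 = 0)),
        if_neg (by have := j.isLt; omega : ¬ (j' + 1 = r)), if_neg (by omega : ¬ (j' + 1 = 0))]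
      simp
  have hLHS : Matrix.vecMul (rV r p) Cm j = if (j : ℕ) = 0 then c else g.coeff ((j : ℕ) - 1) := by
    have hvm : Matrix.vecMul (rV r p) Cm j = ∑ i : Fin r, rV r p i * Cm i j := rfl
    rw [hvm]
    have hrlt : r - 1 < r := by omega
    set i₀ : Fin r := if (j : ℕ) = 0 then ⟨r - 1, hrlt⟩ else ⟨(j : ℕ) - 1, by omega⟩ with hi₀
    rw [Finset.sum_eq_single i₀]
    · rw [hC]
      have hcond : (j : ℕ) = ((i₀ : ℕ) + 1) % r := by
        by_cases h : (j : ℕ) = 0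
        · rw [hi₀, if_pos h]
          show (j : ℕ) = (r - 1 + 1) % r
          rw [(by omega : r - 1 + 1 = r), Nat.mod_self, h]
        · rw [hi₀, if_neg h]
          show (j : ℕ) = ((j : ℕ) - 1 + 1) % r
          rw [(by omega : (j : ℕ) - 1 + 1 = (j : ℕ)), Nat.mod_eq_of_lt j.isLt]
      rw [if_pos hcond, mul_one]
      show g.coeff (i₀ : ℕ) = _
      by_cases h : (j : ℕ) = 0
      · rw [if_pos h, hi₀]
        simp only [if_pos h]
        rfl
      · rw [if_neg h, hi₀]
        simp only [if_neg h]
    · intro b _ hb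
      rw [hC]
      have hnot : ¬ ((j : ℕ) = ((b : ℕ) + 1) % r) := by
        intro hcontra
        apply hb
        have hblt : (b : ℕ) < r := b.isLt
        apply Fin.ext
        by_cases hbr : (b : ℕ) + 1 = r
        · rw [hbr, Nat.mod_self] at hcontra
          rw [hi₀, if_pos hcontra]
          show (b : ℕ) = r - 1
          omega
        · rw [Nat.mod_eq_of_lt (by omega)] at hcontra
          rw [hi₀, if_neg (by omega)]
          show (b : ℕ) = (j : ℕ) - 1
          omega
      rw [if_neg hnot, mul_zero]
    · intro h; exact absurd (Finset.mem_univ i₀) h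
  rw [hLHS, hRHS]

lemma vecMul_rV_Cm_pow (hr : 0 < r) (n : ℕ) (p : ℤ[X]) :
    Matrix.vecMul (rV r p) (Cm ^ n) = rV r (X ^ n * p) := by
  induction n with
  | zero => simp [Matrix.vecMul_one]
  | succ n ih =>
    rw [pow_succ, ← Matrix.vecMul_vecMul, ih, vecMul_rV_Cm Cm hC hr]
    congr 1
    ring

lemma vecMul_rV_aeval (hr : 0 < r) (m : ℕ) (f p : ℤ[X]) :
    Matrix.vecMul (rV r p) (Polynomial.aeval (Cm ^ m) f) = rV r (f.comp (X ^ m) * p) := by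
  induction f using Polynomial.induction_on' with
  | add f g ihf ihg =>
    rw [map_add, Matrix.vecMul_add, ihf, ihg, add_comp, add_mul, rV_add]
  | monomial n a =>
    rw [aeval_monomial, ← C_mul_X_pow_eq_monomial, mul_comp, C_comp, pow_comp, X_comp,
      ← pow_mul]
    have halg : (algebraMap ℤ (Matrix (Fin r) (Fin r) ℤ)) a * Cm ^ (m * n)
        = a • (Cm ^ (m * n)) := by
      rw [Algebra.algebraMap_eq_smul_one, smul_mul_assoc, one_mul]
    rw [halg, vecMul_matrix_smul, vecMul_rV_Cm_pow Cm hC hr, mul_assoc, rV_C_mul, pow_mul]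

end withC
end aux

section more
variable {r : ℕ}

lemma transpose_aeval (M : Matrix (Fin r) (Fin r) ℤ) (f : ℤ[X]) :
    (Polynomial.aeval M f).transpose = Polynomial.aeval M.transpose f := by
  induction f using Polynomial.induction_on' with
  | add f g ihf ihg => rw [map_add, Matrix.transpose_add, ihf, ihg, map_add]
  | monomial n a =>
    rw [aeval_monomial, aeval_monomial, Algebra.algebraMap_eq_smul_one, smul_mul_assoc,
      one_mul, Matrix.transpose_smul, Matrix.transpose_pow, smul_mul_assoc, one_mul]

variable (Cm : Matrix (Fin r) (Fin r) ℤ)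
  (hC : ∀ i j, Cm i j = if (j : ℕ) = ((i : ℕ) + 1) % r then 1 else 0)

include hC

lemma Cm_pow_r (hr : 0 < r) : Cm ^ r = 1 := by
  ext i j
  have hrow : (Cm ^ r) i = Pi.single (⟨(r + (i : ℕ)) % r, Nat.mod_lt _ hr⟩ : Fin r) (1 : ℤ) := by
    rw [row_eq_vecMul hr (Cm ^ r) i, vecMul_rV_Cm_pow Cm hC hr, ← pow_add, rV_X_pow hr]
  have h1 : (⟨(r + (i : ℕ)) % r, Nat.mod_lt _ hr⟩ : Fin r) = i := by
    apply Fin.ext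
    show (r + (i : ℕ)) % r = (i : ℕ)
    rw [Nat.add_mod_left, Nat.mod_eq_of_lt i.isLt]
  rw [congrFun hrow j, h1, Matrix.one_apply, Pi.single_apply]
  by_cases h : i = j
  · rw [if_pos h.symm, if_pos h]
  · rw [if_neg (fun hc => h hc.symm), if_neg h]

lemma CmT (hr : 0 < r) : Cm.transpose = Cm ^ (r - 1) := by
  ext i j
  rw [Matrix.transpose_apply, hC]
  have h2 : (Cm ^ (r - 1)) i
      = Pi.single (⟨(r - 1 + (i : ℕ)) % r, Nat.mod_lt _ hr⟩ : Fin r) (1 : ℤ) := by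
    rw [row_eq_vecMul hr (Cm ^ (r - 1)) i, vecMul_rV_Cm_pow Cm hC hr, ← pow_add, rV_X_pow hr]
  rw [congrFun h2 j, Pi.single_apply]
  have hiff : ((i : ℕ) = ((j : ℕ) + 1) % r)
      ↔ (j = (⟨(r - 1 + (i : ℕ)) % r, Nat.mod_lt _ hr⟩ : Fin r)) := by
    constructor
    · intro h
      apply Fin.ext
      show (j : ℕ) = (r - 1 + (i : ℕ)) % r
      by_cases hj : (j : ℕ) + 1 = r
      · rw [hj, Nat.mod_self] at h
        rw [h, (by omega : r - 1 + 0 = r - 1), Nat.mod_eq_of_lt (by omega)]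
        omega
      · rw [Nat.mod_eq_of_lt (by have := j.isLt; omega)] at h
        rw [(by omega : r - 1 + (i : ℕ) = r + (j : ℕ)), Nat.add_mod_left,
          Nat.mod_eq_of_lt j.isLt]
    · intro h
      have hj : (j : ℕ) = (r - 1 + (i : ℕ)) % r := congrArg Fin.val h
      by_cases hi : (i : ℕ) = 0
      · rw [hi, (by omega : r - 1 + 0 = r - 1), Nat.mod_eq_of_lt (by omega)] at hj
        rw [hi, hj, (by omega : r - 1 + 1 = r), Nat.mod_self]
      · rw [(by omega : r - 1 + (i : ℕ) = r + ((i : ℕ) - 1)), Nat.add_mod_left,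
          Nat.mod_eq_of_lt (by have := i.isLt; omega)] at hj
        rw [hj, (by omega : (i : ℕ) - 1 + 1 = (i : ℕ)), Nat.mod_eq_of_lt i.isLt]
  rw [if_congr hiff rfl rfl]

end more

section pal2
variable {r : ℕ}

lemma qdvd_main (hr : 0 < r) {Φ Ψ : ℤ[X]} (hΦ : Φ.Monic) (hfact : Φ * Ψ = X ^ r - 1) (j : ℕ) :
    (X ^ r - 1 : ℤ[X]) ∣ Φ.comp (X ^ (r - 1)) * (X ^ j * Ψ) := by
  set s := Φ.natDegree with hs
  have hdvdΦ : Φ ∣ X ^ r - 1 := ⟨Ψ, hfact.symm⟩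
  have hpal := pal hr hΦ hdvdΦ
  have hΦsum : Φ = ∑ k ∈ Finset.range (s + 1), C (Φ.coeff k) * X ^ k := by
    conv_lhs => rw [as_sum_range' Φ (s + 1) (Nat.lt_succ_self _)]
    exact Finset.sum_congr rfl fun k _ => (C_mul_X_pow_eq_monomial).symm
  have hD : (X ^ r - 1 : ℤ[X]) ∣ X ^ s * Φ.comp (X ^ (r - 1)) - Φ.reverse := by
    have hrefl : ∀ t : Finset ℕ,
        reflect s (∑ k ∈ t, C (Φ.coeff k) * X ^ k)
          = ∑ k ∈ t, C (Φ.coeff k) * X ^ (revAt s k) := by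
      intro t
      induction t using Finset.induction with
      | empty => simp
      | insert _ _ hnm ih =>
        rw [Finset.sum_insert hnm, reflect_add, reflect_C_mul_X_pow, ih, Finset.sum_insert hnm]
    have hrev : Φ.reverse = ∑ k ∈ Finset.range (s + 1), C (Φ.coeff k) * X ^ (s - k) := by
      have h0 : Φ.reverse = reflect s Φ := rfl
      rw [h0]
      conv_lhs => rw [hΦsum]
      rw [hrefl]
      refine Finset.sum_congr rfl fun k hk => ?_
      rw [revAt_le (by simpa using Nat.lt_succ_iff.mp (Finset.mem_range.mp hk))]
    have hcompsum : X ^ s * Φ.comp (X ^ (r - 1))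
        = ∑ k ∈ Finset.range (s + 1), C (Φ.coeff k) * X ^ (s + k * (r - 1)) := by
      conv_lhs => rw [hΦsum]
      rw [sum_comp, Finset.mul_sum]
      refine Finset.sum_congr rfl fun k hk => ?_
      rw [mul_comp, C_comp, pow_comp, X_comp, ← pow_mul, pow_add, pow_mul]
      ring
    rw [hcompsum, hrev, ← Finset.sum_sub_distrib]
    refine Finset.dvd_sum fun k hk => ?_
    have hks : k ≤ s := Nat.lt_succ_iff.mp (Finset.mem_range.mp hk)
    have hexp : s + k * (r - 1) = (s - k) + r * k := by
      have h1 : r * k = k + (r - 1) * k := by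
        have h2 : r = 1 + (r - 1) := by omega
        calc r * k = (1 + (r - 1)) * k := by rw [← h2]
          _ = k + (r - 1) * k := by ring
      have h3 : k * (r - 1) = (r - 1) * k := Nat.mul_comm _ _
      omega
    have hterm : C (Φ.coeff k) * X ^ (s + k * (r - 1)) - C (Φ.coeff k) * X ^ (s - k)
        = (C (Φ.coeff k) * X ^ (s - k)) * ((X ^ r) ^ k - 1 ^ k) := by
      rw [hexp, pow_add, pow_mul]
      ring
    rw [hterm]
    exact Dvd.dvd.mul_left (by simpa using sub_dvd_pow_sub_pow ((X : ℤ[X]) ^ r) 1 k) _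
  have h1 : (X ^ r - 1 : ℤ[X]) ∣ X ^ s * (Φ.comp (X ^ (r - 1)) * (X ^ j * Ψ)) := by
    have heq : X ^ s * (Φ.comp (X ^ (r - 1)) * (X ^ j * Ψ))
        = (X ^ s * Φ.comp (X ^ (r - 1)) - Φ.reverse) * (X ^ j * Ψ)
          + X ^ j * (C (Φ.coeff 0) * (X ^ r - 1)) := by
      linear_combination (X ^ j * Ψ : ℤ[X]) * hpal + (X ^ j * C (Φ.coeff 0) : ℤ[X]) * hfact
    rw [heq]
    exact dvd_add (Dvd.dvd.mul_right hD _) ⟨X ^ j * C (Φ.coeff 0), by ring⟩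
  have hcop : IsCoprime ((X : ℤ[X]) ^ s) (X ^ r - 1) := by
    apply IsCoprime.pow_left
    refine ⟨X ^ (r - 1), -1, ?_⟩
    have hxx : (X : ℤ[X]) ^ (r - 1) * X = X ^ r := by
      rw [← pow_succ]
      congr 1
      omega
    rw [hxx]
    ring
  exact (hcop.symm).dvd_of_dvd_mul_left h1

end pal2

/-- Example 3.2: with `tʳ − 1 = Φ·Ψ`, `C` the companion matrix of `tʳ − 1`,
`A = Φ(C)`, and `R` the `s × r` matrix (`s = deg Φ`) whose `i`-th row gives the
coefficients of `t^i Ψ` modulo `tʳ − 1`, we have `RA = 0`, `ARᵀ = 0`, and `R`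
has an `s × s` minor invertible over `ℤ`. -/
theorem companion_annihilator_matrix (r s : ℕ) (hr : 0 < r)
    (Φ Ψ : ℤ[X]) (hΦ : Φ.Monic) (hfact : Φ * Ψ = X ^ r - 1) (hs : s = Φ.natDegree)
    (Cm : Matrix (Fin r) (Fin r) ℤ)
    (hC : ∀ i j, Cm i j = if (j : ℕ) = ((i : ℕ) + 1) % r then 1 else 0)
    (A : Matrix (Fin r) (Fin r) ℤ) (hA : A = Polynomial.aeval Cm Φ)
    (R : Matrix (Fin s) (Fin r) ℤ)
    (hR : ∀ i j, R i j = ((X ^ (i : ℕ) * Ψ) %ₘ (X ^ r - 1)).coeff (j : ℕ)) :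
    R * A = 0 ∧ A * R.transpose = 0 ∧
      ∃ c : Fin s → Fin r, Function.Injective c ∧
        IsUnit (Matrix.det (R.submatrix id c)) := by
  subst hA
  have hq : (X ^ r - 1 : ℤ[X]).Monic := q_monic hr
  have hRrow : ∀ i : Fin s, R i = rV r (X ^ (i : ℕ) * Ψ) := fun i => funext fun j => hR i j
  have hΨm : Ψ.Monic := hΦ.of_mul_monic_left (by rw [hfact]; exact hq)
  have hdegsum : Φ.natDegree + Ψ.natDegree = r := by
    rw [← natDegree_mul hΦ.ne_zero hΨm.ne_zero, hfact]
    simpa using (natDegree_X_pow_sub_C (n := r) (r := (1 : ℤ)))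
  have hsr : s ≤ r := by omega
  have hΨdeg : Ψ.natDegree = r - s := by omega
  refine ⟨?_, ?_, ?_⟩
  · -- R * A = 0
    refine Matrix.ext fun i j => ?_
    have h0 : aeval Cm Φ = aeval (Cm ^ 1) Φ := by rw [pow_one]
    have h1 : (R * aeval Cm Φ) i j = Matrix.vecMul (R i) (aeval Cm Φ) j := rfl
    rw [h1, h0, hRrow i, vecMul_rV_aeval Cm hC hr 1 Φ _]
    have hdvd : (X ^ r - 1 : ℤ[X]) ∣ Φ.comp (X ^ 1) * (X ^ (i : ℕ) * Ψ) := by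
      refine ⟨X ^ (i : ℕ), ?_⟩
      rw [pow_one, comp_X, ← hfact]
      ring
    rw [rV_zero_of_dvd hr hdvd]
    simp
  · -- A * Rᵀ = 0
    have hT : (aeval Cm Φ).transpose = aeval (Cm ^ (r - 1)) Φ := by
      rw [transpose_aeval, CmT Cm hC hr]
    have h2 : R * (aeval Cm Φ).transpose = 0 := by
      refine Matrix.ext fun i j => ?_
      have h1 : (R * (aeval Cm Φ).transpose) i j
          = Matrix.vecMul (R i) ((aeval Cm Φ).transpose) j := rfl
      rw [h1, hT, hRrow i, vecMul_rV_aeval Cm hC hr (r - 1) Φ _,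
        rV_zero_of_dvd hr (qdvd_main hr hΦ hfact (i : ℕ))]
      simp
    calc aeval Cm Φ * R.transpose
        = (R * (aeval Cm Φ).transpose).transpose := by
          rw [Matrix.transpose_mul, Matrix.transpose_transpose]
      _ = 0 := by rw [h2, Matrix.transpose_zero]
  · -- invertible minor
    refine ⟨fun i => ⟨r - s + (i : ℕ), by have := i.isLt; omega⟩, ?_, ?_⟩
    · intro a b hab
      have h3 : r - s + (a : ℕ) = r - s + (b : ℕ) := congrArg Fin.val hab
      exact Fin.ext (by omega)
    · have hmodself : ∀ i : Fin s, (X ^ (i : ℕ) * Ψ) %ₘ (X ^ r - 1) = X ^ (i : ℕ) * Ψ := by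
        intro i
        rw [modByMonic_eq_self_iff hq, q_deg hr]
        have hne : (X : ℤ[X]) ^ (i : ℕ) * Ψ ≠ 0 :=
          mul_ne_zero (pow_ne_zero _ X_ne_zero) hΨm.ne_zero
        rw [degree_eq_natDegree hne]
        have h4 : ((X : ℤ[X]) ^ (i : ℕ) * Ψ).natDegree < r := by
          rw [natDegree_mul (pow_ne_zero _ X_ne_zero) hΨm.ne_zero, natDegree_X_pow]
          have := i.isLt; omega
        exact_mod_cast h4
      have hentry : ∀ (i k : Fin s),
          R i (⟨r - s + (k : ℕ), by have := k.isLt; omega⟩ : Fin r)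
            = (X ^ (i : ℕ) * Ψ).coeff (r - s + (k : ℕ)) := by
        intro i k
        rw [hR, hmodself i]
      have htri : (R.submatrix id fun i : Fin s =>
          (⟨r - s + (i : ℕ), by have := i.isLt; omega⟩ : Fin r)).BlockTriangular
          OrderDual.toDual := by
        intro i k hik
        have hik' : i < k := hik
        show R i _ = 0
        rw [hentry i k, coeff_X_pow_mul']
        rw [if_pos (by have := i.isLt; have := k.isLt; have : (i:ℕ) < (k:ℕ) := hik'; omega)]
        apply coeff_eq_zero_of_natDegree_lt
        rw [hΨdeg]
        have : (i : ℕ) < (k : ℕ) := hik'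
        omega
      have hdet : (R.submatrix id fun i : Fin s =>
          (⟨r - s + (i : ℕ), by have := i.isLt; omega⟩ : Fin r)).det = 1 := by
        rw [Matrix.det_of_lowerTriangular _ htri]
        apply Finset.prod_eq_one
        intro i _
        show R i _ = 1
        rw [hentry i i, coeff_X_pow_mul]
        rw [← hΨdeg]
        exact hΨm.coeff_natDegree
      rw [hdet]
      exact isUnit_one
end
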